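/- arXiv:1901.03824 — 8 statements merged into one kernel-verified Lean document; each statement's English description precedes it below -/
import Mathlib

section
/- Let F be a non-archimedean local field with ring of integers o, prime element ϖ, and residue field of cardinality q. Let E/F be a quadratic field extension with ring of integers O and ramification index e(E/F) ∈ {1,2}. For r ≥ 0 let O_r = o + ϖ^r O be the order of level r. Then O_r^× is a subgroup of O^×, and its index is as follows: if E/F is unramified, [O^× : O_r^×] = q^r(1 + q^{-1}) = q^{r-1}(q+1) for r ≥ 1 and [O^× : O_r^×] = 1 for r = 0; if E/F is ramified, [O^× : O_r^×] = q^r. -/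
/-- The order `o + c·O` inside a ring `O`, for a subring `o` and an element `c`. -/
def orderSubring {O : Type*} [CommRing O] (o : Subring O) (c : O) : Subring O where
  carrier := {x : O | ∃ y ∈ o, ∃ z : O, x = y + c * z}
  zero_mem' := ⟨0, o.zero_mem, 0, by ring⟩
  one_mem' := ⟨1, o.one_mem, 0, by ring⟩
  add_mem' := by
    intro x y hx hy
    obtain ⟨u, hu, z, rfl⟩ := hx
    obtain ⟨u', hu', z', rfl⟩ := hy
    exact ⟨u + u', o.add_mem hu hu', z + z', by ring⟩
  neg_mem' := by
    intro x hx
    obtain ⟨u, hu, z, rfl⟩ := hx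
    exact ⟨-u, o.neg_mem hu, -z, by ring⟩
  mul_mem' := by
    intro x y hx hy
    obtain ⟨u, hu, z, rfl⟩ := hx
    obtain ⟨u', hu', z', rfl⟩ := hy
    exact ⟨u * u', o.mul_mem hu hu', u * z' + u' * z + c * z * z', by ring⟩

lemma mem_orderSubring {O : Type*} [CommRing O] {o : Subring O} {c x : O} :
    x ∈ orderSubring o c ↔ ∃ y ∈ o, ∃ z : O, x = y + c * z := Iff.rfl

lemma card_quot_pow_dvr {R : Type*} [CommRing R] [IsDomain R] [IsDiscreteValuationRing R]
    {π : R} (hπ : Irreducible π) (k : ℕ) :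
    Nat.card (R ⧸ Ideal.span {π ^ k}) = Nat.card (R ⧸ Ideal.span {π}) ^ k := by
  haveI hprime : (Ideal.span {π}).IsPrime :=
    (Ideal.span_singleton_prime hπ.ne_zero).mpr
      (UniqueFactorizationMonoid.irreducible_iff_prime.mp hπ)
  have hbot : Ideal.span {π} ≠ ⊥ := by
    simpa [Ideal.span_singleton_eq_bot] using hπ.ne_zero
  have h := cardQuot_pow_of_prime (S := R) (P := Ideal.span {π}) hbot (i := k)
  rw [← Ideal.span_singleton_pow]
  simpa [Submodule.cardQuot_apply] using h

/-- the units of a comm monoid are equivalent to the subtype of unit elements -/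
noncomputable def unitsEquivIsUnit {M : Type*} [CommMonoid M] : Mˣ ≃ {x : M // IsUnit x} where
  toFun u := ⟨u, u.isUnit⟩
  invFun x := x.2.unit
  left_inv _ := Units.ext rfl
  right_inv x := Subtype.ext x.2.unit_spec

lemma card_units_quot_dvr {R : Type*} [CommRing R] [IsDomain R] [IsDiscreteValuationRing R]
    {π : R} (hπ : Irreducible π) {Q : ℕ} (hQ : Nat.card (R ⧸ Ideal.span {π}) = Q)
    (hQ1 : 1 < Q) {n : ℕ} (hn : 1 ≤ n) :
    Nat.card (R ⧸ Ideal.span {π ^ n})ˣ = Q ^ (n - 1) * (Q - 1) := by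
  set I : Ideal R := Ideal.span {π ^ n} with hI
  have hcard : Nat.card (R ⧸ I) = Q ^ n := by rw [hI, card_quot_pow_dvr hπ, hQ]
  have hQ0 : Q ≠ 0 := by omega
  haveI : Finite (R ⧸ I) :=
    (Nat.card_ne_zero.mp (by rw [hcard]; positivity)).2
  haveI : Nontrivial (R ⧸ I) := by
    refine Ideal.Quotient.nontrivial_iff.mpr ?_
    rw [hI, Ne, Ideal.span_singleton_eq_top]
    intro h
    exact hπ.not_isUnit ((isUnit_pow_iff (by omega)).mp h)
  have hle : I ≤ Ideal.span {π} := by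
    rw [hI, Ideal.span_singleton_le_span_singleton]
    exact dvd_pow_self π (by omega)
  have hmapcard : Nat.card (Submodule.map I.mkQ (Ideal.span {π})) = Q ^ (n - 1) := by
    have key := Submodule.card_quotient_mul_card_quotient (Ideal.span {π}) I hle
    rw [hcard, hQ] at key
    have h1 : Q ^ n = Q ^ (n - 1) * Q := by
      rw [← pow_succ]
      congr 1
      omega
    rw [h1] at key
    exact Nat.eq_of_mul_eq_mul_right (by omega) key
  have hset : {x : R ⧸ I | ¬ IsUnit x} = (Submodule.map I.mkQ (Ideal.span {π}) : Set (R ⧸ I)) := by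
    ext x
    obtain ⟨a, rfl⟩ := Ideal.Quotient.mk_surjective x
    simp only [Set.mem_setOf_eq, SetLike.mem_coe, Submodule.mem_map]
    constructor
    · intro hx
      have ha : ¬ IsUnit a := fun h => hx (h.map (Ideal.Quotient.mk I))
      have hmem : a ∈ Ideal.span {π} := by
        rw [← hπ.maximalIdeal_eq]
        exact (IsLocalRing.mem_maximalIdeal a).mpr ha
      exact ⟨a, hmem, rfl⟩
    · rintro ⟨b, hb, heq⟩
      rw [← heq]
      rw [Ideal.mem_span_singleton] at hb
      obtain ⟨t, rfl⟩ := hb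
      intro h
      have hπu : IsUnit ((Ideal.Quotient.mk I) π) := by
        have h2 : (Ideal.Quotient.mk I) (π * t)
            = (Ideal.Quotient.mk I) π * (Ideal.Quotient.mk I) t := map_mul _ _ _
        rw [show (Submodule.mkQ I) (π * t) = (Ideal.Quotient.mk I) (π * t) from rfl, h2] at h
        exact isUnit_of_mul_isUnit_left h
      have h3 : IsUnit ((Ideal.Quotient.mk I) π ^ n) := hπu.pow n
      rw [← map_pow, Ideal.Quotient.eq_zero_iff_mem.mpr
        (by rw [hI]; exact Ideal.subset_span rfl)] at h3
      exact not_isUnit_zero h3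
  have hunits : Nat.card (R ⧸ I)ˣ = Nat.card {x : R ⧸ I | IsUnit x} :=
    Nat.card_congr unitsEquivIsUnit
  have hcompl : Nat.card {x : R ⧸ I | IsUnit x} + Nat.card {x : R ⧸ I | ¬ IsUnit x}
      = Nat.card (R ⧸ I) := by
    rw [Nat.card_coe_set_eq, Nat.card_coe_set_eq]
    have h4 : {x : R ⧸ I | ¬ IsUnit x} = {x : R ⧸ I | IsUnit x}ᶜ := by ext x; simp
    rw [h4]
    exact Set.ncard_add_ncard_compl _ (Set.toFinite _)
  have hnon : Nat.card {x : R ⧸ I | ¬ IsUnit x} = Q ^ (n - 1) := by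
    rw [hset]; exact hmapcard
  rw [hunits]
  have h5 : Q ^ (n - 1) * (Q - 1) = Q ^ n - Q ^ (n - 1) := by
    rw [Nat.mul_sub, mul_one, ← pow_succ]
    congr 2
    omega
  omega

lemma index_ker_units_quot {R : Type*} [CommRing R] [IsLocalRing R] {I : Ideal R} (hI : I ≠ ⊤) :
    (Units.map (Ideal.Quotient.mk I).toMonoidHom).ker.index = Nat.card (R ⧸ I)ˣ := by
  haveI : Nontrivial (R ⧸ I) := Ideal.Quotient.nontrivial_iff.mpr hI
  have hsurj : Function.Surjective (Units.map (Ideal.Quotient.mk I).toMonoidHom) :=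
    IsLocalRing.surjective_units_map_of_local_ringHom _ Ideal.Quotient.mk_surjective
      (IsLocalHom.of_surjective _ Ideal.Quotient.mk_surjective)
  rw [Subgroup.index_ker, MonoidHom.range_eq_top.mpr hsurj, Subgroup.card_top]

lemma dvd_coe_iff {O : Type*} [CommRing O] [IsDomain O] {o : Subring O}
    [IsDomain o] [IsDiscreteValuationRing o] {ϖ : o} (hϖo : Irreducible ϖ)
    (hnu : ¬ IsUnit (ϖ : O)) (r : ℕ) (a : o) :
    (ϖ : O) ^ r ∣ (a : O) ↔ ϖ ^ r ∣ a := by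
  constructor
  · intro h
    rcases eq_or_ne a 0 with rfl | ha
    · exact dvd_zero _
    obtain ⟨m, u, hu⟩ := IsDiscreteValuationRing.eq_unit_mul_pow_irreducible ha hϖo
    by_cases hmr : r ≤ m
    · rw [hu]
      exact Dvd.dvd.mul_left (pow_dvd_pow _ hmr) _
    exfalso
    push_neg at hmr
    rw [hu] at h
    push_cast at h
    obtain ⟨t, ht⟩ := h
    have hϖ0 : (ϖ : O) ≠ 0 := by
      simpa using (Subtype.coe_injective.ne_iff.mpr hϖo.ne_zero : (ϖ : O) ≠ ((0 : o) : O))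
    have hcancel : ((u : o) : O) = (ϖ : O) ^ (r - m) * t := by
      have hr : (ϖ : O) ^ r = (ϖ : O) ^ m * (ϖ : O) ^ (r - m) := by
        rw [← pow_add]; congr 1; omega
      apply mul_left_cancel₀ (pow_ne_zero m hϖ0)
      calc (ϖ : O) ^ m * ((u : o) : O) = ((u : o) : O) * (ϖ : O) ^ m := by ring
        _ = (ϖ : O) ^ r * t := ht
        _ = (ϖ : O) ^ m * ((ϖ : O) ^ (r - m) * t) := by rw [hr]; ring
    have huu : IsUnit ((u : o) : O) := (u.isUnit).map o.subtype
    have h6 : IsUnit ((ϖ : O) ^ (r - m)) := isUnit_of_dvd_unit ⟨t, hcancel⟩ huu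
    exact hnu ((isUnit_pow_iff (by omega : r - m ≠ 0)).mp h6)
  · rintro ⟨b, hb⟩
    refine ⟨(b : O), ?_⟩
    have h7 := congrArg (fun x : o => (x : O)) hb
    push_cast at h7
    exact h7

lemma mem_unitsRange_of_mem {O : Type*} [CommRing O] (S : Subring O) (u : Oˣ)
    (hu : (u : O) ∈ S) (hu' : ((u⁻¹ : Oˣ) : O) ∈ S) :
    u ∈ (Units.map S.subtype.toMonoidHom).range := by
  refine ⟨⟨⟨(u : O), hu⟩, ⟨((u⁻¹ : Oˣ) : O), hu'⟩, Subtype.ext (by simp), Subtype.ext (by simp)⟩,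
    Units.ext rfl⟩

lemma mem_of_mem_unitsRange {O : Type*} [CommRing O] {S : Subring O} {u : Oˣ}
    (h : u ∈ (Units.map S.subtype.toMonoidHom).range) :
    (u : O) ∈ S ∧ ((u⁻¹ : Oˣ) : O) ∈ S := by
  obtain ⟨U, rfl⟩ := h
  constructor
  · exact (U : S).2
  · have h8 : ((Units.map S.subtype.toMonoidHom) U)⁻¹ = (Units.map S.subtype.toMonoidHom) U⁻¹ :=
      (map_inv _ _).symm
    rw [h8]
    exact ((U⁻¹ : Sˣ) : S).2

lemma key_index {O : Type*} [CommRing O] [IsDomain O] [IsDiscreteValuationRing O]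
    (o : Subring O) [IsDomain o] [IsDiscreteValuationRing o]
    {ϖ : o} (hϖo : Irreducible ϖ) (hnu : ¬ IsUnit (ϖ : O))
    {q : ℕ} (hq1 : 1 < q) (hqo : Nat.card (o ⧸ Ideal.span {ϖ}) = q) {r : ℕ} (hr : 1 ≤ r) :
    q ^ (r - 1) * (q - 1) *
      (Units.map (orderSubring o ((ϖ : O) ^ r)).subtype.toMonoidHom).range.index
      = Nat.card (O ⧸ Ideal.span {(ϖ : O) ^ r})ˣ := by
  set c : O := (ϖ : O) ^ r with hc_def
  set I : Ideal O := Ideal.span {c} with hI_def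
  set φ : Oˣ →* (O ⧸ I)ˣ := Units.map (Ideal.Quotient.mk I).toMonoidHom with hφ_def
  set K : Subgroup Oˣ := φ.ker with hK_def
  set H : Subgroup Oˣ := (Units.map (orderSubring o c).subtype.toMonoidHom).range with hH_def
  set j : oˣ →* Oˣ := Units.map o.subtype.toMonoidHom with hj_def
  have hc : ¬ IsUnit c := fun h => hnu ((isUnit_pow_iff (by omega : r ≠ 0)).mp h)
  have hITop : I ≠ ⊤ := by rw [hI_def, Ne, Ideal.span_singleton_eq_top]; exact hc
  have hKmem : ∀ u : Oˣ, u ∈ K ↔ c ∣ ((u : O) - 1) := by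
    intro u
    rw [hK_def, MonoidHom.mem_ker, Units.ext_iff]
    show Ideal.Quotient.mk I (u : O) = 1 ↔ _
    rw [show (1 : O ⧸ I) = Ideal.Quotient.mk I 1 from (map_one _).symm, Ideal.Quotient.eq,
      hI_def, Ideal.mem_span_singleton]
  have hKH : K ≤ H := by
    intro u hu
    obtain ⟨z, hz⟩ := (hKmem u).mp hu
    obtain ⟨w, hw⟩ := (hKmem u⁻¹).mp (inv_mem hu)
    exact mem_unitsRange_of_mem _ u ⟨1, o.one_mem, z, by linear_combination hz⟩
      ⟨1, o.one_mem, w, by linear_combination hw⟩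
  have hAH : j.range ≤ H := by
    rintro _ ⟨a, rfl⟩
    refine mem_unitsRange_of_mem _ _ ⟨((a : o) : O), SetLike.coe_mem _, 0, by simp [hj_def]⟩ ?_
    have h9 : (j a)⁻¹ = j a⁻¹ := (map_inv j a).symm
    rw [h9]
    exact ⟨(((a⁻¹ : oˣ) : o) : O), SetLike.coe_mem _, 0, by simp [hj_def]⟩
  have hHle : H ≤ j.range ⊔ K := by
    intro u hu
    obtain ⟨hu1, hu2⟩ := mem_of_mem_unitsRange hu
    obtain ⟨y, hy, z, hz⟩ := mem_orderSubring.mp hu1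
    have hyO : IsUnit y := by
      by_contra hny
      have hmem : (u : O) ∈ IsLocalRing.maximalIdeal O := by
        rw [hz]
        exact Ideal.add_mem _ ((IsLocalRing.mem_maximalIdeal y).mpr hny)
          (Ideal.mul_mem_right z _ ((IsLocalRing.mem_maximalIdeal c).mpr hc))
      exact (IsLocalRing.mem_maximalIdeal _).mp hmem u.isUnit
    have hyo : IsUnit (⟨y, hy⟩ : o) := by
      by_contra hny
      have hm : (⟨y, hy⟩ : o) ∈ Ideal.span {ϖ} := by
        rw [← hϖo.maximalIdeal_eq]
        exact (IsLocalRing.mem_maximalIdeal _).mpr hny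
      rw [Ideal.mem_span_singleton] at hm
      obtain ⟨t, ht⟩ := hm
      have hyt : y = (ϖ : O) * (t : O) := by
        have h10 := congrArg (fun x : o => (x : O)) ht
        push_cast at h10
        exact h10
      exact hnu (isUnit_of_mul_isUnit_left (hyt ▸ hyO))
    set a : oˣ := hyo.unit with ha_def
    have hja : ((j a : Oˣ) : O) = y := by
      have h11 : ((a : o) : O) = y := by rw [ha_def, hyo.unit_spec]
      simp [hj_def, h11]
    have hφeq : φ (j a) = φ u := by
      apply Units.ext
      show Ideal.Quotient.mk I _ = Ideal.Quotient.mk I _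
      rw [Ideal.Quotient.eq, hja, hz, hI_def, Ideal.mem_span_singleton]
      exact ⟨-z, by ring⟩
    refine Subgroup.mem_sup.mpr ⟨j a, ⟨a, rfl⟩, (j a)⁻¹ * u, ?_, ?_⟩
    · rw [hK_def, MonoidHom.mem_ker, map_mul, map_inv, hφeq, inv_mul_cancel]
    · rw [mul_inv_cancel_left]
  have hH : H = j.range ⊔ K := le_antisymm hHle (sup_le hAH hKH)
  have hrel : K.relIndex H = (K.comap j).index := by
    rw [hH, Subgroup.relIndex_sup_right, ← Subgroup.index_comap]
  have hcomap : K.comap j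
      = (Units.map (Ideal.Quotient.mk (Ideal.span {ϖ ^ r})).toMonoidHom).ker := by
    ext u
    rw [Subgroup.mem_comap, hKmem, MonoidHom.mem_ker, Units.ext_iff]
    show c ∣ ((j u : Oˣ) : O) - 1 ↔ Ideal.Quotient.mk (Ideal.span {ϖ ^ r}) (u : o) = 1
    rw [show (1 : o ⧸ Ideal.span {ϖ ^ r}) = Ideal.Quotient.mk _ 1 from (map_one _).symm,
      Ideal.Quotient.eq, Ideal.mem_span_singleton]
    have h12 : ((j u : Oˣ) : O) - 1 = ((((u : o) - 1 : o)) : O) := by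
      simp [hj_def]
    rw [h12, hc_def, dvd_coe_iff hϖo hnu r]
  have hKrel : K.relIndex H = q ^ (r - 1) * (q - 1) := by
    have hNT : (Ideal.span {ϖ ^ r} : Ideal o) ≠ ⊤ := by
      rw [Ne, Ideal.span_singleton_eq_top]
      exact fun h => hϖo.not_isUnit ((isUnit_pow_iff (by omega : r ≠ 0)).mp h)
    rw [hrel, hcomap, index_ker_units_quot hNT, card_units_quot_dvr hϖo hqo hq1 hr]
  have hKidx : K.index = Nat.card (O ⧸ I)ˣ := index_ker_units_quot hITop
  calc q ^ (r - 1) * (q - 1) * H.index = K.relIndex H * H.index := by rw [hKrel]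
    _ = K.index := Subgroup.relIndex_mul_index hKH
    _ = Nat.card (O ⧸ I)ˣ := hKidx

/-- Index of the unit group of the order `O_r = o + ϖ^r O` in `O^×`, for a quadratic
extension of non-archimedean local fields (encoded via the rings of integers): it is `1`
for `r = 0`, `q^{r-1}(q+1)` in the unramified case and `q^r` in the ramified case. -/
theorem stmt_2 (O : Type*) [CommRing O] [IsDomain O] [IsDiscreteValuationRing O]
    (o : Subring O) [IsDomain o] [IsDiscreteValuationRing o]
    (ϖ : o) (hϖo : Irreducible ϖ)
    (θ : O) (hgen : ∀ x : O, ∃ c d : o, x = (c : O) + (d : O) * θ)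
    (q : ℕ) (hq1 : 1 < q) (hqo : Nat.card (o ⧸ Ideal.span {ϖ}) = q) (r : ℕ) :
    (r = 0 →
      (Units.map (orderSubring o ((ϖ : O) ^ r)).subtype.toMonoidHom).range.index = 1) ∧
    (Irreducible (ϖ : O) → Nat.card (O ⧸ Ideal.span {(ϖ : O)}) = q ^ 2 → 1 ≤ r →
      (Units.map (orderSubring o ((ϖ : O) ^ r)).subtype.toMonoidHom).range.index
        = q ^ (r - 1) * (q + 1)) ∧
    (∀ ϖE : O, Irreducible ϖE → Associated ((ϖ : O)) (ϖE ^ 2) →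
        Nat.card (O ⧸ Ideal.span {ϖE}) = q → 1 ≤ r →
      (Units.map (orderSubring o ((ϖ : O) ^ r)).subtype.toMonoidHom).range.index
        = q ^ r) := by
  refine ⟨?_, ?_, ?_⟩
  · intro hr0
    subst hr0
    have h1 : orderSubring o ((ϖ : O) ^ (0 : ℕ)) = ⊤ := by
      ext x
      exact ⟨fun _ => trivial, fun _ => mem_orderSubring.mpr ⟨0, o.zero_mem, x, by ring⟩⟩
    rw [h1]
    have h2 : (Units.map (⊤ : Subring O).subtype.toMonoidHom).range = ⊤ := by
      rw [eq_top_iff]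
      intro u _
      exact mem_unitsRange_of_mem _ u (Subring.mem_top _) (Subring.mem_top _)
    rw [h2, Subgroup.index_top]
  · intro hirr hcard2 hr
    have hnu : ¬ IsUnit (ϖ : O) := hirr.not_isUnit
    have hkey := key_index o hϖo hnu hq1 hqo hr
    rw [card_units_quot_dvr hirr hcard2 (Nat.one_lt_pow (by omega) hq1) hr] at hkey
    obtain ⟨m, rfl⟩ : ∃ m, q = m + 2 := ⟨q - 2, by omega⟩
    have e1 : ((m + 2) ^ 2) ^ (r - 1) = (m + 2) ^ (r - 1) * (m + 2) ^ (r - 1) := by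
      rw [← pow_mul, two_mul, pow_add]
    have e2 : (m + 2) ^ 2 - 1 = (m + 1) * (m + 3) := by
      have h : (m + 2) ^ 2 = (m + 1) * (m + 3) + 1 := by ring
      rw [h]
      simp
    have e3 : m + 2 - 1 = m + 1 := rfl
    rw [e1, e2, e3] at hkey
    exact mul_left_cancel₀ (show ((m + 2) ^ (r - 1) * (m + 1) : ℕ) ≠ 0 by positivity)
      (by rw [hkey]; ring)
  · intro ϖE hϖE hass hcardE hr
    have hnu : ¬ IsUnit (ϖ : O) := fun h =>
      hϖE.not_isUnit ((isUnit_pow_iff two_ne_zero).mp (hass.isUnit h))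
    have hkey := key_index o hϖo hnu hq1 hqo hr
    have hspan : Ideal.span {(ϖ : O) ^ r} = Ideal.span {ϖE ^ (2 * r)} := by
      rw [Ideal.span_singleton_eq_span_singleton]
      have h := hass.pow_pow (n := r)
      rwa [← pow_mul] at h
    rw [hspan, card_units_quot_dvr hϖE hcardE hq1 (by omega : 1 ≤ 2 * r)] at hkey
    have e : q ^ (2 * r - 1) = q ^ (r - 1) * q ^ r := by
      rw [← pow_add]; congr 1; omega
    rw [e] at hkey
    exact mul_left_cancel₀
      (Nat.mul_ne_zero (pow_ne_zero _ (by omega : q ≠ 0)) (by omega : q - 1 ≠ 0))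
      (by rw [hkey]; ring)
end

section
/- Let F be a non-archimedean local field with ring of integers o and residue cardinality q. Let E/F be an unramified quadratic extension with ring of integers O and normalized valuation v_E. Write O_r = o + ϖ^r O. For ℓ ≥ 0, the set O_r^{(ℓ)} := {e ∈ O_r : v_E(e) = ℓ} equals ϖ_E^ℓ O^× if ℓ ≥ r, equals ϖ_E^ℓ O_{r−ℓ}^× if ℓ < r, where ϖ_E is a uniformizer of E (which may be taken equal to ϖ since E/F is unramified). -/
/-!
For `ℓ < r`, `ϖ^ℓ u` (with `u ∈ O^×`) lies in `O_r` exactly when `u ∈ O_{r-ℓ}`: if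
`ϖ^ℓ u = y + ϖ^r z` with `y ∈ o`, then `ϖ^ℓ` divides `y` in `O`, hence in `o` because `ϖ`
is a uniformizer of both discrete valuation rings, and one may cancel `ϖ^ℓ`. Finally, an element
`y + ϖ^s z` of `O_s` (`s > 0`) that is a unit of `O` has `y ∈ o^×`, and
`y⁻¹ - ϖ^s y⁻¹ z (y + ϖ^s z)⁻¹` is its inverse inside `O_s`.
-/

section orderSubring

variable {O : Type*} [CommRing O] {o : Subring O}

theorem mul_mem_orderSubring (c x : O) : c * x ∈ orderSubring o c :=
  ⟨0, o.zero_mem, x, by rw [zero_add]⟩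

theorem mul_mem_orderSubring_mul {c d x : O} (hc : c ∈ o) (hx : x ∈ orderSubring o d) :
    c * x ∈ orderSubring o (c * d) := by
  obtain ⟨y, hy, z, rfl⟩ := hx
  exact ⟨c * y, o.mul_mem hc hy, z, by ring⟩

theorem isUnit_of_eq_unit_add_mul {c : O} {x : orderSubring o c} (hx : IsUnit (x : O))
    (y : oˣ) (z : O) (hxyz : (x : O) = (y : O) + c * z) : IsUnit x := by
  obtain ⟨u, hu⟩ := hx
  set w : O := ((y⁻¹ : oˣ) : O)
  have hw : (y : O) * w = 1 := by
    simp only [w, ← Subring.coe_mul, Units.mul_inv, Subring.coe_one]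
  have hinv_mem : w - c * (w * z * (u⁻¹ : Oˣ)) ∈ orderSubring o c :=
    ⟨w, SetLike.coe_mem _, -(w * z * (u⁻¹ : Oˣ)), by ring⟩
  refine IsUnit.of_mul_eq_one (a := x) ⟨_, hinv_mem⟩ (Subtype.ext ?_)
  have hu1 : (u : O) * (u⁻¹ : Oˣ) = 1 := u.mul_inv
  rw [← hu] at hxyz
  simp only [Subring.coe_mul, Subring.coe_one, ← hu]
  linear_combination w * hxyz + hw - c * w * z * hu1

end orderSubring

section Uniformizer

variable {O : Type*} [CommRing O] {o : Subring O} [IsDomain o] [IsDiscreteValuationRing o]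
  {ϖ : o}

theorem exists_mem_eq_pow_mul_of_pow_dvd [IsDomain O] (hϖo : Irreducible ϖ)
    (hϖO : Irreducible (ϖ : O)) {n : ℕ} {y : O} (hy : y ∈ o) (hdvd : (ϖ : O) ^ n ∣ y) :
    ∃ y' ∈ o, y = (ϖ : O) ^ n * y' := by
  by_cases hy0 : (⟨y, hy⟩ : o) = 0
  · exact ⟨0, o.zero_mem, by simpa using congrArg Subtype.val hy0⟩
  obtain ⟨m, w, hw⟩ := IsDiscreteValuationRing.eq_unit_mul_pow_irreducible hy0 hϖo
  have hyw : y = ((w : o) : O) * (ϖ : O) ^ m := by simpa using congrArg Subtype.val hw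
  have hnm : n ≤ m := by
    have hwO : IsUnit ((w : o) : O) := w.isUnit.map o.subtype
    rw [hyw, hwO.dvd_mul_left] at hdvd
    exact (pow_dvd_pow_iff hϖO.ne_zero hϖO.not_isUnit).1 hdvd
  refine ⟨(w : O) * (ϖ : O) ^ (m - n), o.mul_mem (SetLike.coe_mem _) (o.pow_mem ϖ.2 _), ?_⟩
  rw [hyw, mul_left_comm, ← pow_add, Nat.add_sub_cancel' hnm]

theorem pow_mul_mem_orderSubring_pow_add_iff [IsDomain O] (hϖo : Irreducible ϖ)
    (hϖO : Irreducible (ϖ : O)) {ℓ s : ℕ} {x : O} :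
    (ϖ : O) ^ ℓ * x ∈ orderSubring o ((ϖ : O) ^ (ℓ + s)) ↔
      x ∈ orderSubring o ((ϖ : O) ^ s) := by
  refine ⟨fun ⟨y, hy, z, hxyz⟩ ↦ ?_, fun hx ↦ ?_⟩
  · have hdvd : (ϖ : O) ^ ℓ ∣ y :=
      ⟨x - (ϖ : O) ^ s * z, by rw [mul_sub, hxyz, pow_add]; ring⟩
    obtain ⟨y', hy', rfl⟩ := exists_mem_eq_pow_mul_of_pow_dvd hϖo hϖO hy hdvd
    refine ⟨y', hy', z, mul_left_cancel₀ (pow_ne_zero ℓ hϖO.ne_zero) ?_⟩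
    rw [hxyz, pow_add]
    ring
  · rw [pow_add]
    exact mul_mem_orderSubring_mul (o.pow_mem ϖ.2 ℓ) hx

theorem isUnit_orderSubring_pow_iff (hϖo : Irreducible ϖ) (hϖO : Irreducible (ϖ : O))
    {s : ℕ} (hs : s ≠ 0) (x : orderSubring o ((ϖ : O) ^ s)) : IsUnit x ↔ IsUnit (x : O) := by
  refine ⟨fun hx ↦ hx.map (orderSubring o _).subtype, fun hx ↦ ?_⟩
  obtain ⟨y, hy, z, hxyz⟩ := x.2
  have hyu : IsUnit (⟨y, hy⟩ : o) := by
    by_contra hnu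
    have hϖy : ϖ ∣ ⟨y, hy⟩ := by
      rw [← Ideal.mem_span_singleton, ← hϖo.maximalIdeal_eq]
      exact (IsLocalRing.mem_maximalIdeal _).2 hnu
    have hϖx : (ϖ : O) ∣ x := by
      rw [hxyz]
      exact dvd_add (map_dvd o.subtype hϖy) ((dvd_pow_self _ hs).mul_right z)
    exact hϖO.not_isUnit (isUnit_of_dvd_unit hϖx hx)
  exact isUnit_of_eq_unit_add_mul hx hyu.unit z hxyz

end Uniformizer

theorem stmt_3_general (O : Type*) [CommRing O] [IsDomain O]
    (o : Subring O) [IsDomain o] [IsDiscreteValuationRing o]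
    (ϖ : o) (hϖo : Irreducible ϖ) (hϖO : Irreducible (ϖ : O))
    (r ℓ : ℕ) :
    (r ≤ ℓ →
      {e : O | e ∈ orderSubring o ((ϖ : O) ^ r) ∧ ∃ u : Oˣ, e = (ϖ : O) ^ ℓ * u}
        = {e : O | ∃ u : Oˣ, e = (ϖ : O) ^ ℓ * u}) ∧
    (ℓ < r →
      {e : O | e ∈ orderSubring o ((ϖ : O) ^ r) ∧ ∃ u : Oˣ, e = (ϖ : O) ^ ℓ * u}
        = {e : O | ∃ x : (orderSubring o ((ϖ : O) ^ (r - ℓ))), IsUnit x ∧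
            e = (ϖ : O) ^ ℓ * (x : O)}) := by
  refine ⟨fun hrℓ ↦ ?_, fun hℓr ↦ ?_⟩
  · refine Set.ext fun e ↦ ⟨And.right, fun ⟨u, he⟩ ↦ ⟨?_, u, he⟩⟩
    rw [he, ← Nat.add_sub_cancel' hrℓ, pow_add, mul_assoc]
    exact mul_mem_orderSubring _ _
  · have hs : r - ℓ ≠ 0 := Nat.sub_ne_zero_of_lt hℓr
    have hmem : ∀ {x : O}, (ϖ : O) ^ ℓ * x ∈ orderSubring o ((ϖ : O) ^ r) ↔
        x ∈ orderSubring o ((ϖ : O) ^ (r - ℓ)) := by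
      rw [← Nat.add_sub_cancel' hℓr.le, Nat.add_sub_cancel_left]
      exact pow_mul_mem_orderSubring_pow_add_iff hϖo hϖO
    ext e
    constructor
    · rintro ⟨he, u, rfl⟩
      exact ⟨⟨u, hmem.1 he⟩, (isUnit_orderSubring_pow_iff hϖo hϖO hs _).2 u.isUnit, rfl⟩
    · rintro ⟨x, hx, rfl⟩
      exact ⟨hmem.2 x.2, ((isUnit_orderSubring_pow_iff hϖo hϖO hs x).1 hx).unit, rfl⟩

/-- For an unramified quadratic extension (encoded via rings of integers `o ⊆ O` with a
common uniformizer `ϖ`), the elements of the order `O_r = o + ϖ^r O` of valuation `ℓ`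
are `ϖ^ℓ O^×` if `ℓ ≥ r` and `ϖ^ℓ O_{r-ℓ}^×` if `ℓ < r`. -/
theorem stmt_3 (O : Type*) [CommRing O] [IsDomain O] [IsDiscreteValuationRing O]
    (o : Subring O) [IsDomain o] [IsDiscreteValuationRing o]
    (ϖ : o) (hϖo : Irreducible ϖ) (hϖO : Irreducible (ϖ : O))
    (θ : O) (hgen : ∀ x : O, ∃ c d : o, x = (c : O) + (d : O) * θ)
    (q : ℕ) (hq1 : 1 < q) (hqo : Nat.card (o ⧸ Ideal.span {ϖ}) = q)
    (hqO : Nat.card (O ⧸ Ideal.span {(ϖ : O)}) = q ^ 2)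
    (r ℓ : ℕ) :
    (r ≤ ℓ →
      {e : O | e ∈ orderSubring o ((ϖ : O) ^ r) ∧ ∃ u : Oˣ, e = (ϖ : O) ^ ℓ * u}
        = {e : O | ∃ u : Oˣ, e = (ϖ : O) ^ ℓ * u}) ∧
    (ℓ < r →
      {e : O | e ∈ orderSubring o ((ϖ : O) ^ r) ∧ ∃ u : Oˣ, e = (ϖ : O) ^ ℓ * u}
        = {e : O | ∃ x : (orderSubring o ((ϖ : O) ^ (r - ℓ))), IsUnit x ∧
            e = (ϖ : O) ^ ℓ * (x : O)}) :=
  stmt_3_general O o ϖ hϖo hϖO r ℓ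
end

section
/- Let F be a field and E = F[X]/(X² − tX + 1) a quadratic field extension of F generated by an element β with β² − tβ + 1 = 0, embedded in Mat_2(F) as a torus T(F) ≅ E^×. Then GL_2(F) decomposes as a disjoint union over α ∈ F^×/(F^×)² of double cosets T(F)·diag(α,1)·P_1(F), where P_1(F) is the group of upper triangular matrices of determinant 1. Moreover for each α, the quotient T(F)\T(F)·diag(α,1)·P_1(F) is in bijection with {±1}\P_1(F). -/
/-!
Write `τ(a, b) = a + bγ = !![a + bt, -b; b, a]`. Its first column `(a + bt, b)` determines `(a, b)`,
and `det τ(a, b) = a² + abt + b²` vanishes only at `(0, 0)` because `X² - tX + 1` has no root.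
Given `g`, take the `τ` with the same first column as `g`: then `τ⁻¹g` is upper triangular, and
`diag(α, 1)` with `α = det g / det τ` absorbs its determinant. If
`τ diag(α, 1) p = τ' diag(α', 1) p'`, the first columns force `τ' = λτ`, and the determinants give
`α = λ²α'`. If `diag(α, 1) p' = τ diag(α, 1) p`, then `τ` preserves the line `Fe₁`, so `τ = a` is
a scalar, and `det p = det p' = 1` forces `a = ±1`.
-/

open Matrix Polynomial

section

variable {F : Type*} [Field F]

theorem sq_add_mul_mul_add_sq_ne_zero {t : F} (hirr : Irreducible (X ^ 2 - C t * X + 1 : F[X]))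
    {a b : F} (hab : a ≠ 0 ∨ b ≠ 0) : a ^ 2 + a * b * t + b ^ 2 ≠ 0 := by
  rcases eq_or_ne b 0 with rfl | hb
  · simpa using hab
  · have hdeg : (X ^ 2 - C t * X + 1 : F[X]).natDegree = 2 := by compute_degree!
    have hnoroot : ¬(X ^ 2 - C t * X + 1 : F[X]).IsRoot (-a / b) :=
      hirr.not_isRoot_of_natDegree_ne_one (by omega)
    have heval : a ^ 2 + a * b * t + b ^ 2 = b ^ 2 * ((-a / b) ^ 2 - t * (-a / b) + 1) := by
      field_simp
      ring
    simpa [heval, hb] using hnoroot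

/-- The element `a + bγ` of `T`, for `γ` the companion matrix of `X² - tX + 1`. -/
def torusMatrix (t a b : F) : Matrix (Fin 2) (Fin 2) F := a • 1 + b • !![t, -1; 1, 0]

theorem torusMatrix_eq (t a b : F) : torusMatrix t a b = !![a + b * t, -b; b, a] := by
  ext i j
  fin_cases i <;> fin_cases j <;> simp [torusMatrix, one_apply]

theorem det_torusMatrix (t a b : F) : (torusMatrix t a b).det = a ^ 2 + a * b * t + b ^ 2 := by
  rw [torusMatrix_eq, det_fin_two_of]
  ring

theorem torusMatrix_zero_right (t a : F) : torusMatrix t a 0 = a • 1 := by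
  simp [torusMatrix]

theorem torusMatrix_smul (t c a b : F) : torusMatrix t (c * a) (c * b) = c • torusMatrix t a b := by
  simp only [torusMatrix, smul_add, smul_smul]

theorem torusMatrix_apply_zero_zero (t a b : F) : torusMatrix t a b 0 0 = a + b * t := by
  simp [torusMatrix_eq]

theorem torusMatrix_apply_one_zero (t a b : F) : torusMatrix t a b 1 0 = b := by
  simp [torusMatrix_eq]

theorem mul_diagonal_mul_apply_zero_of_apply_one_zero (M : Matrix (Fin 2) (Fin 2) F) (α : F)
    {p : Matrix (Fin 2) (Fin 2) F} (hp : p 1 0 = 0) (i : Fin 2) :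
    (M * diagonal ![α, 1] * p) i 0 = M i 0 * (α * p 0 0) := by
  simp [mul_apply, Fin.sum_univ_two, hp]
  ring

theorem det_diagonal_vecCons_one (α : F) : (diagonal ![α, 1]).det = α := by
  simp [det_diagonal]

theorem apply_zero_zero_ne_zero_of_det_eq_one {p : Matrix (Fin 2) (Fin 2) F} (hp : p 1 0 = 0)
    (hdet : p.det = 1) : p 0 0 ≠ 0 := by
  rintro h
  simp [det_fin_two, h, hp] at hdet

theorem Matrix.units_inv_mul_apply_of_apply_eq {n R : Type*} [Fintype n] [DecidableEq n]
    [Semiring R] (u : (Matrix n n R)ˣ) {M : Matrix n n R} {j : n}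
    (h : ∀ i, M i j = (u : Matrix n n R) i j) (i : n) :
    ((u⁻¹ : (Matrix n n R)ˣ) * M : Matrix n n R) i j = (1 : Matrix n n R) i j := by
  simp only [mul_apply, h]
  rw [← mul_apply, Units.inv_mul]

theorem exists_eq_torusMatrix_mul_diagonal_mul {t : F}
    (hirr : Irreducible (X ^ 2 - C t * X + 1 : F[X])) (g : (Matrix (Fin 2) (Fin 2) F)ˣ) :
    ∃ (τ p : (Matrix (Fin 2) (Fin 2) F)ˣ) (a b : F) (α : Fˣ),
      (τ : Matrix (Fin 2) (Fin 2) F) = torusMatrix t a b ∧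
      (p : Matrix (Fin 2) (Fin 2) F) 1 0 = 0 ∧ (p : Matrix (Fin 2) (Fin 2) F).det = 1 ∧
      (g : Matrix (Fin 2) (Fin 2) F) = τ * diagonal ![(α : F), 1] * p := by
  set G : Matrix (Fin 2) (Fin 2) F := ↑g with hGg
  have hG : G.det ≠ 0 := (G.isUnit_iff_isUnit_det.mp g.isUnit).ne_zero
  -- `τ(a, b)` then has the same first column as `g`
  set a := G 0 0 - t * G 1 0
  set b := G 1 0
  have hcol : ∀ i, G i 0 = torusMatrix t a b i 0 := by
    intro i
    fin_cases i <;> simp [torusMatrix_eq, a, b]; ring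
  have hN : a ^ 2 + a * b * t + b ^ 2 ≠ 0 := by
    refine sq_add_mul_mul_add_sq_ne_zero hirr (not_and_or.mp fun hab => hG ?_)
    simp [det_fin_two, hcol, torusMatrix_eq, hab.1, hab.2]
  let τ := GeneralLinearGroup.mkOfDetNeZero (torusMatrix t a b) (by rwa [det_torusMatrix])
  let α := Units.mk0 (G.det / (a ^ 2 + a * b * t + b ^ 2)) (div_ne_zero hG hN)
  let D : GL (Fin 2) F :=
    GeneralLinearGroup.mkOfDetNeZero (diagonal ![(α : F), 1]) (by simp [α, hG, hN])
  let p := D⁻¹ * τ⁻¹ * g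
  have hg : g = τ * D * p := by simp only [p]; group
  have hDp : (D * p : Matrix (Fin 2) (Fin 2) F) =
      ((τ⁻¹ : GL (Fin 2) F) : Matrix (Fin 2) (Fin 2) F) * G := by
    rw [hGg, ← Units.val_mul, ← Units.val_mul]
    simp only [p, mul_assoc, mul_inv_cancel_left]
  refine ⟨τ, p, a, b, α, rfl, ?_, ?_, by simpa [D] using congrArg Units.val hg⟩
  · have := congrFun (congrFun hDp 1) 0
    rw [GeneralLinearGroup.val_mkOfDetNeZero, diagonal_mul,
      units_inv_mul_apply_of_apply_eq τ hcol] at this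
    simpa using this
  · have hdet : G.det = (a ^ 2 + a * b * t + b ^ 2) * (G.det / (a ^ 2 + a * b * t + b ^ 2)) *
        (p : Matrix (Fin 2) (Fin 2) F).det := by
      simpa [det_torusMatrix, det_diagonal_vecCons_one, τ, D, α] using
        congrArg det (congrArg Units.val hg)
    rw [mul_div_cancel₀ _ hN] at hdet
    exact mul_left_cancel₀ hG (hdet.symm.trans (mul_one _).symm)

theorem exists_eq_mul_sq_of_torusMatrix_mul_diagonal_mul_eq {t a b a' b' α α' : F}
    {p p' : Matrix (Fin 2) (Fin 2) F} (hN : a ^ 2 + a * b * t + b ^ 2 ≠ 0) (hα : α ≠ 0)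
    (hα' : α' ≠ 0) (hp : p 1 0 = 0) (hpdet : p.det = 1) (hp' : p' 1 0 = 0) (hp'det : p'.det = 1)
    (h : torusMatrix t a b * diagonal ![α, 1] * p = torusMatrix t a' b' * diagonal ![α', 1] * p') :
    ∃ c : F, c ≠ 0 ∧ α' = α * c ^ 2 := by
  have hu : α * p 0 0 ≠ 0 := mul_ne_zero hα (apply_zero_zero_ne_zero_of_det_eq_one hp hpdet)
  have hu' : α' * p' 0 0 ≠ 0 := mul_ne_zero hα' (apply_zero_zero_ne_zero_of_det_eq_one hp' hp'det)
  have hcol (i : Fin 2) :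
      torusMatrix t a b i 0 * (α * p 0 0) = torusMatrix t a' b' i 0 * (α' * p' 0 0) := by
    simpa [mul_diagonal_mul_apply_zero_of_apply_one_zero, hp, hp'] using
      congrFun (congrFun h i) 0
  have hcol0 := hcol 0
  have hcol1 := hcol 1
  rw [torusMatrix_apply_zero_zero, torusMatrix_apply_zero_zero] at hcol0
  rw [torusMatrix_apply_one_zero, torusMatrix_apply_one_zero] at hcol1
  generalize α * p 0 0 = u at hu hcol0 hcol1
  generalize α' * p' 0 0 = u' at hu' hcol0 hcol1
  have hb' : b' = u / u' * b := by
    field_simp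
    linear_combination -hcol1
  have ha' : a' = u / u' * a := by
    field_simp
    linear_combination -hcol0 + t * hcol1
  have hdet := congrArg det h
  rw [det_mul, det_mul, det_mul, det_mul, hpdet, hp'det, ha', hb', torusMatrix_smul, det_smul,
    det_torusMatrix, det_diagonal_vecCons_one, det_diagonal_vecCons_one, Fintype.card_fin] at hdet
  refine ⟨u' / u, div_ne_zero hu' hu, mul_left_cancel₀ hN ?_⟩
  field_simp at hdet ⊢
  linear_combination -hdet

theorem eq_or_eq_neg_of_diagonal_mul_eq_torusMatrix_mul {t a b α : F}
    {p p' : Matrix (Fin 2) (Fin 2) F} (hα : α ≠ 0) (hp : p 1 0 = 0) (hpdet : p.det = 1)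
    (hp' : p' 1 0 = 0) (hp'det : p'.det = 1)
    (h : diagonal ![α, 1] * p' = torusMatrix t a b * diagonal ![α, 1] * p) : p' = p ∨ p' = -p := by
  obtain rfl : b = 0 := by
    have h10 := congrFun (congrFun h 1) 0
    rw [diagonal_mul, hp', mul_diagonal_mul_apply_zero_of_apply_one_zero _ _ hp,
      torusMatrix_apply_one_zero, mul_zero, eq_comm] at h10
    exact (mul_eq_zero.mp h10).resolve_right
      (mul_ne_zero hα (apply_zero_zero_ne_zero_of_det_eq_one hp hpdet))
  have hdiag : IsUnit (diagonal ![α, 1]) := by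
    simp [isUnit_diagonal, Pi.isUnit_iff, Fin.forall_fin_two, hα]
  have hscalar : p' = a • p := by
    rw [torusMatrix_zero_right, smul_mul, one_mul, smul_mul, ← Matrix.mul_smul] at h
    exact hdiag.mul_left_cancel h
  have ha : a ^ 2 = 1 := by
    simpa [hscalar, det_smul, hpdet] using hp'det
  rcases sq_eq_one_iff.mp ha with rfl | rfl
  · simp [hscalar]
  · simp [hscalar]

end

theorem stmt_4_general (F : Type*) [Field F] (t : F)
    (hirr : Irreducible (Polynomial.X ^ 2 - Polynomial.C t * Polynomial.X + 1 : Polynomial F)) :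
    let γ : Matrix (Fin 2) (Fin 2) F := !![t, -1; 1, 0]
    let T : Set (Matrix (Fin 2) (Fin 2) F)ˣ :=
      {x | ∃ a b : F, (x : Matrix (Fin 2) (Fin 2) F)
          = a • (1 : Matrix (Fin 2) (Fin 2) F) + b • γ}
    let P₁ : Set (Matrix (Fin 2) (Fin 2) F)ˣ :=
      {p | (p : Matrix (Fin 2) (Fin 2) F) 1 0 = 0 ∧ (p : Matrix (Fin 2) (Fin 2) F).det = 1}
    -- every element of GL₂(F) lies in some double coset T·diag(α,1)·P₁
    (∀ g : (Matrix (Fin 2) (Fin 2) F)ˣ,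
      ∃ (τ p : (Matrix (Fin 2) (Fin 2) F)ˣ) (α : Fˣ), τ ∈ T ∧ p ∈ P₁ ∧
        (g : Matrix (Fin 2) (Fin 2) F)
          = (τ : Matrix (Fin 2) (Fin 2) F) * Matrix.diagonal ![(α : F), 1] *
            (p : Matrix (Fin 2) (Fin 2) F)) ∧
    -- the square class of α is uniquely determined (disjointness of the union)
    (∀ (τ τ' p p' : (Matrix (Fin 2) (Fin 2) F)ˣ) (α α' : Fˣ),
      τ ∈ T → τ' ∈ T → p ∈ P₁ → p' ∈ P₁ →
      (τ : Matrix (Fin 2) (Fin 2) F) * Matrix.diagonal ![(α : F), 1] *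
          (p : Matrix (Fin 2) (Fin 2) F)
        = (τ' : Matrix (Fin 2) (Fin 2) F) * Matrix.diagonal ![(α' : F), 1] *
          (p' : Matrix (Fin 2) (Fin 2) F) →
      ∃ c : Fˣ, (α' : F) = (α : F) * (c : F) ^ 2) ∧
    -- T\T·diag(α,1)·P₁ is in bijection with {±1}\P₁
    (∀ (α : Fˣ) (p p' : (Matrix (Fin 2) (Fin 2) F)ˣ), p ∈ P₁ → p' ∈ P₁ →
      ((∃ τ ∈ T, Matrix.diagonal ![(α : F), 1] * (p' : Matrix (Fin 2) (Fin 2) F)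
          = (τ : Matrix (Fin 2) (Fin 2) F) * Matrix.diagonal ![(α : F), 1] *
            (p : Matrix (Fin 2) (Fin 2) F)) ↔
        ((p' : Matrix (Fin 2) (Fin 2) F) = (p : Matrix (Fin 2) (Fin 2) F) ∨
         (p' : Matrix (Fin 2) (Fin 2) F) = -(p : Matrix (Fin 2) (Fin 2) F)))) := by
  intro γ T P₁
  refine ⟨fun g => ?_, ?_, ?_⟩
  · obtain ⟨τ, p, a, b, α, hτ, hp, hpdet, hg⟩ := exists_eq_torusMatrix_mul_diagonal_mul hirr g
    exact ⟨τ, p, α, ⟨a, b, hτ⟩, ⟨hp, hpdet⟩, hg⟩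
  · rintro τ τ' p p' α α' ⟨a, b, hτ : _ = torusMatrix t a b⟩ ⟨a', b', hτ' : _ = torusMatrix t a' b'⟩
      ⟨hp, hpdet⟩ ⟨hp', hp'det⟩ h
    have hN : a ^ 2 + a * b * t + b ^ 2 ≠ 0 := by
      rw [← det_torusMatrix, ← hτ]
      exact ((τ : Matrix (Fin 2) (Fin 2) F).isUnit_iff_isUnit_det.mp τ.isUnit).ne_zero
    rw [hτ, hτ'] at h
    obtain ⟨c, hc, hα'⟩ := exists_eq_mul_sq_of_torusMatrix_mul_diagonal_mul_eq hN α.ne_zero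
      α'.ne_zero hp hpdet hp' hp'det h
    exact ⟨Units.mk0 c hc, hα'⟩
  · rintro α p p' ⟨hp, hpdet⟩ ⟨hp', hp'det⟩
    constructor
    · rintro ⟨τ, ⟨a, b, hτ : _ = torusMatrix t a b⟩, h⟩
      rw [hτ] at h
      exact eq_or_eq_neg_of_diagonal_mul_eq_torusMatrix_mul α.ne_zero hp hpdet hp' hp'det h
    · rintro (h | h)
      · exact ⟨1, ⟨1, 0, by simp⟩, by simp [h]⟩
      · exact ⟨-1, ⟨-1, 0, by simp⟩, by simp only [h, Units.val_neg, Units.val_one, Matrix.mul_neg,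
          Matrix.neg_mul, Matrix.one_mul]⟩

/-- Double coset decomposition `GL₂(F) = ⊔_{α ∈ F^×/(F^×)²} T(F)·diag(α,1)·P₁(F)` for the
non-split torus `T = F[γ]^×` attached to an irreducible polynomial `X² - tX + 1`, together
with the identification `T(F)\T(F)·diag(α,1)·P₁(F) ≃ {±1}\P₁(F)`. -/
theorem stmt_4 (F : Type*) [Field F] (hchar : (2 : F) ≠ 0) (t : F)
    (hirr : Irreducible (Polynomial.X ^ 2 - Polynomial.C t * Polynomial.X + 1 : Polynomial F)) :
    let γ : Matrix (Fin 2) (Fin 2) F := !![t, -1; 1, 0]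
    let T : Set (Matrix (Fin 2) (Fin 2) F)ˣ :=
      {x | ∃ a b : F, (x : Matrix (Fin 2) (Fin 2) F)
          = a • (1 : Matrix (Fin 2) (Fin 2) F) + b • γ}
    let P₁ : Set (Matrix (Fin 2) (Fin 2) F)ˣ :=
      {p | (p : Matrix (Fin 2) (Fin 2) F) 1 0 = 0 ∧ (p : Matrix (Fin 2) (Fin 2) F).det = 1}
    -- every element of GL₂(F) lies in some double coset T·diag(α,1)·P₁
    (∀ g : (Matrix (Fin 2) (Fin 2) F)ˣ,
      ∃ (τ p : (Matrix (Fin 2) (Fin 2) F)ˣ) (α : Fˣ), τ ∈ T ∧ p ∈ P₁ ∧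
        (g : Matrix (Fin 2) (Fin 2) F)
          = (τ : Matrix (Fin 2) (Fin 2) F) * Matrix.diagonal ![(α : F), 1] *
            (p : Matrix (Fin 2) (Fin 2) F)) ∧
    -- the square class of α is uniquely determined (disjointness of the union)
    (∀ (τ τ' p p' : (Matrix (Fin 2) (Fin 2) F)ˣ) (α α' : Fˣ),
      τ ∈ T → τ' ∈ T → p ∈ P₁ → p' ∈ P₁ →
      (τ : Matrix (Fin 2) (Fin 2) F) * Matrix.diagonal ![(α : F), 1] *
          (p : Matrix (Fin 2) (Fin 2) F)
        = (τ' : Matrix (Fin 2) (Fin 2) F) * Matrix.diagonal ![(α' : F), 1] *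
          (p' : Matrix (Fin 2) (Fin 2) F) →
      ∃ c : Fˣ, (α' : F) = (α : F) * (c : F) ^ 2) ∧
    -- T\T·diag(α,1)·P₁ is in bijection with {±1}\P₁
    (∀ (α : Fˣ) (p p' : (Matrix (Fin 2) (Fin 2) F)ˣ), p ∈ P₁ → p' ∈ P₁ →
      ((∃ τ ∈ T, Matrix.diagonal ![(α : F), 1] * (p' : Matrix (Fin 2) (Fin 2) F)
          = (τ : Matrix (Fin 2) (Fin 2) F) * Matrix.diagonal ![(α : F), 1] *
            (p : Matrix (Fin 2) (Fin 2) F)) ↔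
        ((p' : Matrix (Fin 2) (Fin 2) F) = (p : Matrix (Fin 2) (Fin 2) F) ∨
         (p' : Matrix (Fin 2) (Fin 2) F) = -(p : Matrix (Fin 2) (Fin 2) F)))) :=
  stmt_4_general F t hirr
end

section
/- Let o be the ring of integers of a non-archimedean local field F with residue cardinality q, uniformizer ϖ, and let n ≥ 1, l < n be non-negative integers. Then N_∞(r; n, l) := |{α ∈ o/ϖ^n o : α(α + ϖ^r) ∈ ϖ^{n+r−l} o}| equals 2q^l for 0 ≤ r < n − l, and equals q^{⌊(n+l−r)/2⌋} for n − l ≤ r ≤ l. -/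
/-!
Write `m = n - l` and `N = n + r - l` for the exponent of the congruence. Since `ϖ` is prime,
`ϖ^N ∣ a (a + ϖ^r)` splits as `ϖ^i ∣ a`, `ϖ^j ∣ a + ϖ^r` with `i + j = N`, and the two factors
differ by `ϖ^r`, so they cannot both be divisible by `ϖ^(r+1)`. If `r < m` this forces
`ϖ^m ∣ a` or `ϖ^m ∣ a + ϖ^r`: the solutions form the ideal `ϖ^m o / ϖ^n o` of size `q^l` and a
disjoint translate of it. If `N ≤ 2r` the condition is simply `ϖ^⌈N/2⌉ ∣ a`, whose solutions
form an ideal of size `q^(n - ⌈N/2⌉) = q^⌊(n+l-r)/2⌋`.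
-/

open Ideal

theorem Prime.exists_add_eq_pow_dvd_and_pow_dvd {M : Type*} [CommMonoidWithZero M]
    [IsCancelMulZero M] [DecompositionMonoid M] {p x y : M} (hp : Prime p) {N : ℕ}
    (h : p ^ N ∣ x * y) : ∃ i j, i + j = N ∧ p ^ i ∣ x ∧ p ^ j ∣ y := by
  obtain ⟨d₁, d₂, hd₁, hd₂, hN⟩ := exists_dvd_and_dvd_of_dvd_mul h
  obtain ⟨i, hiN, hi⟩ := (dvd_prime_pow hp N).mp (hN ▸ dvd_mul_right d₁ d₂)
  obtain ⟨j, -, hj⟩ := (dvd_prime_pow hp N).mp (hN ▸ dvd_mul_left d₂ d₁)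
  have hij : N ≤ i + j := by
    rw [← pow_dvd_pow_iff hp.ne_zero hp.not_isUnit, hN, pow_add]
    exact (hi.mul_mul hj).dvd
  exact ⟨i, N - i, by omega, hi.dvd'.trans hd₁,
    (pow_dvd_pow p (by omega)).trans (hj.dvd'.trans hd₂)⟩

theorem Function.Surjective.exists_apply_eq_and_iff {α β : Type*} {f : α → β}
    (hf : Function.Surjective f) {P : α → Prop} {Q : β → Prop} (hPQ : ∀ a, P a ↔ Q (f a))
    (b : β) : (∃ a, f a = b ∧ P a) ↔ Q b := by
  refine ⟨fun ⟨a, ha, h⟩ => ha ▸ (hPQ a).mp h, fun h => ?_⟩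
  obtain ⟨a, rfl⟩ := hf b
  exact ⟨a, rfl, (hPQ a).mpr h⟩

theorem AddSubgroup.natCard_mem_or_add_mem {G : Type*} [AddGroup G] [Finite G]
    (H : AddSubgroup G) {c : G} (hc : c ∉ H) :
    Nat.card {x // x ∈ H ∨ x + c ∈ H} = 2 * Nat.card H := by
  classical
  have hdisj : Disjoint (· ∈ H) (· + c ∈ H) := by
    rw [disjoint_iff_inf_le]
    rintro x ⟨hx, hxc⟩
    exact hc ((H.add_mem_cancel_left hx).mp hxc)
  rw [Nat.card_congr (subtypeOrEquiv _ _ hdisj), Nat.card_sum, two_mul,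
    Nat.card_congr ((Equiv.addRight c).subtypeEquiv (p := (· + c ∈ H)) (q := (· ∈ H))
      fun _ => Iff.rfl)]

theorem Ideal.Quotient.mk_mem_map_span_pow_iff {R : Type*} [CommRing R] {p : R} {k n : ℕ}
    (hkn : k ≤ n) (a : R) :
    Ideal.Quotient.mk (span {p ^ n}) a ∈ (span {p ^ k}).map (Ideal.Quotient.mk _) ↔ p ^ k ∣ a :=
  (mem_quotient_iff_mem (span_singleton_le_span_singleton.mpr (pow_dvd_pow p hkn))).trans
    mem_span_singleton

section PowDvdMulAddPow

variable {R : Type*} [CommRing R] [IsDomain R] [DecompositionMonoid R] {p : R}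

theorem pow_add_dvd_mul_add_pow_iff (hp : Prime p) {m r : ℕ} (hrm : r < m) (a : R) :
    p ^ (m + r) ∣ a * (a + p ^ r) ↔ p ^ m ∣ a ∨ p ^ m ∣ a + p ^ r := by
  have hpr : p ^ r ∣ p ^ m := pow_dvd_pow p hrm.le
  constructor
  · intro h
    obtain ⟨i, j, hij, hi, hj⟩ := hp.exists_add_eq_pow_dvd_and_pow_dvd h
    by_contra! hcon
    have him : i < m := lt_of_not_ge fun him => hcon.1 ((pow_dvd_pow p him).trans hi)
    have hjm : j < m := lt_of_not_ge fun hjm => hcon.2 ((pow_dvd_pow p hjm).trans hj)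
    have ha : p ^ (r + 1) ∣ a := (pow_dvd_pow p (by omega)).trans hi
    have hb : p ^ (r + 1) ∣ a + p ^ r := (pow_dvd_pow p (by omega)).trans hj
    have := (pow_dvd_pow_iff hp.ne_zero hp.not_isUnit).mp ((dvd_add_right ha).mp hb)
    omega
  · rintro (hm | hm)
    · rw [pow_add]
      exact mul_dvd_mul hm ((dvd_add_right (hpr.trans hm)).mpr dvd_rfl)
    · rw [add_comm, pow_add]
      exact mul_dvd_mul ((dvd_add_left dvd_rfl).mp (hpr.trans hm)) hm

theorem pow_dvd_mul_add_pow_iff (hp : Prime p) {N r : ℕ} (hNr : N ≤ 2 * r) (a : R) :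
    p ^ N ∣ a * (a + p ^ r) ↔ p ^ ((N + 1) / 2) ∣ a := by
  have hpr : p ^ ((N + 1) / 2) ∣ p ^ r := pow_dvd_pow p (by omega)
  constructor
  · intro h
    obtain ⟨i, j, hij, hi, hj⟩ := hp.exists_add_eq_pow_dvd_and_pow_dvd h
    rcases le_or_gt ((N + 1) / 2) i with hki | hik
    · exact (pow_dvd_pow p hki).trans hi
    · exact (dvd_add_left hpr).mp ((pow_dvd_pow p (by omega)).trans hj)
  · intro ha
    have hb : p ^ ((N + 1) / 2) ∣ a + p ^ r := (dvd_add_right ha).mpr hpr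
    exact (pow_dvd_pow p (by omega)).trans (pow_add p _ _ ▸ mul_dvd_mul ha hb)

end PowDvdMulAddPow

section QuotientCard

variable {R : Type*} [CommRing R] [IsDedekindDomain R] {p : R}

theorem natCard_quotient_span_pow (hp : Prime p) (j : ℕ) :
    Nat.card (R ⧸ span {p ^ j}) = Nat.card (R ⧸ span {p}) ^ j := by
  have : (span {p}).IsPrime := (span_singleton_prime hp.ne_zero).mpr hp
  rw [← span_singleton_pow, ← Submodule.cardQuot_apply, cardQuot_pow_of_prime,
    Submodule.cardQuot_apply]
  simpa using hp.ne_zero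

theorem natCard_map_span_pow (hp : Prime p) (h0 : Nat.card (R ⧸ span {p}) ≠ 0) {k n : ℕ}
    (hkn : k ≤ n) :
    Nat.card ((span {p ^ k}).map (Ideal.Quotient.mk (span {p ^ n}))) =
      Nat.card (R ⧸ span {p}) ^ (n - k) := by
  have hle : span {p ^ n} ≤ span {p ^ k} :=
    span_singleton_le_span_singleton.mpr (pow_dvd_pow p hkn)
  have hcard := Submodule.card_eq_card_quotient_mul_card
    ((span {p ^ k}).map (Ideal.Quotient.mk (span {p ^ n})))
  have hpow : Nat.card (R ⧸ span {p}) ^ n =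
      Nat.card (R ⧸ span {p}) ^ (n - k) * Nat.card (R ⧸ span {p}) ^ k := by
    rw [← pow_add, Nat.sub_add_cancel hkn]
  rw [Nat.card_congr (DoubleQuot.quotQuotEquivQuotOfLE hle).toEquiv,
    natCard_quotient_span_pow hp, natCard_quotient_span_pow hp, hpow] at hcard
  exact (Nat.eq_of_mul_eq_mul_right (pos_of_ne_zero (pow_ne_zero _ h0)) hcard).symm

end QuotientCard

section CountSolutions

variable {R : Type*} [CommRing R] [IsDomain R] [IsPrincipalIdealRing R] {p : R}

theorem natCard_mul_add_pow_mem_span_pow_of_lt (hp : Prime p)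
    (h0 : Nat.card (R ⧸ span {p}) ≠ 0) {n m r : ℕ} (hrm : r < m) (hmn : m ≤ n) :
    Nat.card {x : R ⧸ span {p ^ n} //
        ∃ a, Ideal.Quotient.mk (span {p ^ n}) a = x ∧ a * (a + p ^ r) ∈ span {p ^ (m + r)}} =
      2 * Nat.card (R ⧸ span {p}) ^ (n - m) := by
  have : Finite (R ⧸ span {p ^ n}) := Nat.finite_of_card_ne_zero <| by
    rw [natCard_quotient_span_pow hp]
    exact pow_ne_zero n h0
  set J := ((span {p ^ m}).map (Ideal.Quotient.mk (span {p ^ n}))).toAddSubgroup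
  have hpr : Ideal.Quotient.mk _ (p ^ r) ∉ J := by
    rw [Submodule.mem_toAddSubgroup, Quotient.mk_mem_map_span_pow_iff hmn,
      pow_dvd_pow_iff hp.ne_zero hp.not_isUnit]
    omega
  calc _ = Nat.card {x // x ∈ J ∨ x + Ideal.Quotient.mk _ (p ^ r) ∈ J} :=
        Nat.card_congr <| Equiv.subtypeEquivRight <|
          Ideal.Quotient.mk_surjective.exists_apply_eq_and_iff fun a => by
            rw [mem_span_singleton, pow_add_dvd_mul_add_pow_iff hp hrm, ← map_add,
              Submodule.mem_toAddSubgroup, Submodule.mem_toAddSubgroup,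
              Quotient.mk_mem_map_span_pow_iff hmn, Quotient.mk_mem_map_span_pow_iff hmn]
    _ = _ := by
        rw [AddSubgroup.natCard_mem_or_add_mem _ hpr]
        exact congrArg _ (natCard_map_span_pow hp h0 hmn)

theorem natCard_mul_add_pow_mem_span_pow_of_le (hp : Prime p)
    (h0 : Nat.card (R ⧸ span {p}) ≠ 0) {n N r : ℕ} (hNr : N ≤ 2 * r) (hNn : N ≤ n) :
    Nat.card {x : R ⧸ span {p ^ n} //
        ∃ a, Ideal.Quotient.mk (span {p ^ n}) a = x ∧ a * (a + p ^ r) ∈ span {p ^ N}} =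
      Nat.card (R ⧸ span {p}) ^ (n - (N + 1) / 2) := by
  have hkn : (N + 1) / 2 ≤ n := by omega
  calc _ = Nat.card ((span {p ^ ((N + 1) / 2)}).map (Ideal.Quotient.mk (span {p ^ n}))) :=
        Nat.card_congr <| Equiv.subtypeEquivRight <|
          Ideal.Quotient.mk_surjective.exists_apply_eq_and_iff fun a => by
            rw [mem_span_singleton, pow_dvd_mul_add_pow_iff hp hNr,
              Quotient.mk_mem_map_span_pow_iff hkn]
    _ = _ := natCard_map_span_pow hp h0 hkn

end CountSolutions

theorem stmt_5_general (o : Type*) [CommRing o] [IsDomain o] [IsDiscreteValuationRing o]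
    (ϖ : o) (hϖ : Irreducible ϖ) (q : ℕ) (hq0 : 0 < q)
    (hq : Nat.card (o ⧸ Ideal.span {ϖ}) = q)
    (n l r : ℕ) (hl : l < n) (hr : r ≤ l) :
    (r + l < n →
      Nat.card {α : o ⧸ Ideal.span {ϖ ^ n} //
        ∃ a : o, Ideal.Quotient.mk (Ideal.span {ϖ ^ n}) a = α ∧
          a * (a + ϖ ^ r) ∈ Ideal.span {ϖ ^ (n + r - l)}} = 2 * q ^ l) ∧
    (n ≤ r + l →
      Nat.card {α : o ⧸ Ideal.span {ϖ ^ n} //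
        ∃ a : o, Ideal.Quotient.mk (Ideal.span {ϖ ^ n}) a = α ∧
          a * (a + ϖ ^ r) ∈ Ideal.span {ϖ ^ (n + r - l)}} = q ^ ((n + l - r) / 2)) := by
  have hp : Prime ϖ := hϖ.prime
  have hq' : Nat.card (o ⧸ span {ϖ}) ≠ 0 := hq ▸ hq0.ne'
  refine ⟨fun hrl => ?_, fun hrl => ?_⟩
  · rw [show n + r - l = (n - l) + r by omega,
      natCard_mul_add_pow_mem_span_pow_of_lt hp hq' (by omega) (by omega), hq,
      Nat.sub_sub_self hl.le]
  · rw [natCard_mul_add_pow_mem_span_pow_of_le hp hq' (by omega) (by omega), hq]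
    congr 1
    omega

/-- Counting `N_∞(r; n, l) = |{α ∈ o/ϖ^n : α(α+ϖ^r) ∈ ϖ^{n+r-l} o}|` in the case `l < n`:
it equals `2q^l` for `0 ≤ r < n - l` and `q^{⌊(n+l-r)/2⌋}` for `n - l ≤ r ≤ l`. -/
theorem stmt_5 (o : Type*) [CommRing o] [IsDomain o] [IsDiscreteValuationRing o]
    (ϖ : o) (hϖ : Irreducible ϖ) (q : ℕ) (hq0 : 0 < q)
    (hq : Nat.card (o ⧸ Ideal.span {ϖ}) = q)
    (n l r : ℕ) (hn : 1 ≤ n) (hl : l < n) (hr : r ≤ l) :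
    (r + l < n →
      Nat.card {α : o ⧸ Ideal.span {ϖ ^ n} //
        ∃ a : o, Ideal.Quotient.mk (Ideal.span {ϖ ^ n}) a = α ∧
          a * (a + ϖ ^ r) ∈ Ideal.span {ϖ ^ (n + r - l)}} = 2 * q ^ l) ∧
    (n ≤ r + l →
      Nat.card {α : o ⧸ Ideal.span {ϖ ^ n} //
        ∃ a : o, Ideal.Quotient.mk (Ideal.span {ϖ ^ n}) a = α ∧
          a * (a + ϖ ^ r) ∈ Ideal.span {ϖ ^ (n + r - l)}} = q ^ ((n + l - r) / 2)) :=
  stmt_5_general o ϖ hϖ q hq0 hq n l r hl hr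
end

section
/- Let o be the ring of integers of a non-archimedean local field with residue cardinality q and uniformizer ϖ. Let E/F be an unramified quadratic extension with ring of integers O = o[θ] where θ² − bθ + a = 0, and let β = θ. For integers n ≥ 1 and l ≥ n, the quantity N_∞(r; n, l) := |{α ∈ o/ϖ^n o : a·ϖ^{2r} − α·b·ϖ^r + α² ∈ ϖ^{n+r−l}o}| equals q^n for 0 ≤ r ≤ l − n and equals q^{⌊(n+l−r)/2⌋} for l − n < r ≤ l. Here the key identity is a·ϖ^{2r} − α·b·ϖ^r + α² = Nm_{E/F}(α − θ·ϖ^r), so the condition is equivalent to 2·min(v(α), r) ≥ n + r − l. -/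
/-!
The element `a ϖ^{2r} - x b ϖ^r + x²` is `Nm(x - θ ϖ^r)`. While `v(x) < r` the term `x²`
strictly dominates the other two, so for `m := n + r - l ≤ 2r` divisibility by `ϖ^m` amounts
to `ϖ^⌈m/2⌉ ∣ x`. The residues mod `ϖ^n` divisible by `ϖ^k` are `ϖ^k · (o/ϖ^{n-k})`, which
gives `q^{n - ⌈m/2⌉} = q^{⌊(n+l-r)/2⌋}`.
-/

theorem pow_dvd_quadratic_iff {R : Type*} [CommRing R] [IsDomain R] {ϖ a b x : R}
    (hϖ : Prime ϖ) {m r : ℕ} (hm : m ≤ 2 * r) :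
    ϖ ^ m ∣ a * ϖ ^ (2 * r) - x * b * ϖ ^ r + x ^ 2 ↔ ϖ ^ ((m + 1) / 2) ∣ x := by
  constructor
  · intro h
    suffices ∀ j ≤ (m + 1) / 2, ϖ ^ j ∣ x from this _ le_rfl
    intro j hj
    induction j with
    | zero => exact (pow_zero ϖ).symm ▸ one_dvd x
    | succ j ih =>
      have hxj := ih (by omega)
      have hlow : ϖ ^ (2 * j + 1) ∣ a * ϖ ^ (2 * r) - x * b * ϖ ^ r := by
        refine dvd_sub ((pow_dvd_pow _ (by omega)).mul_left a) ?_
        rw [mul_right_comm]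
        exact (pow_dvd_pow ϖ (by omega : 2 * j + 1 ≤ j + r)).trans
          (pow_add ϖ j r ▸ (mul_dvd_mul hxj dvd_rfl).mul_right b)
      have hsq : ϖ ^ (j + j + 1) ∣ x * x := by
        rw [← two_mul, ← sq]
        exact (dvd_add_right hlow).1 ((pow_dvd_pow ϖ (by omega)).trans h)
      exact (succ_dvd_or_succ_dvd_of_succ_sum_dvd_mul hϖ hxj hxj hsq).elim id id
  · intro hx
    have hx2 : ϖ ^ m ∣ x ^ 2 :=
      (pow_dvd_pow ϖ (by omega : m ≤ (m + 1) / 2 * 2)).trans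
        (pow_mul ϖ _ 2 ▸ pow_dvd_pow_of_dvd hx 2)
    have hxr : ϖ ^ m ∣ x * b * ϖ ^ r := by
      rw [mul_right_comm]
      exact ((pow_dvd_pow ϖ (by omega : m ≤ (m + 1) / 2 + r)).trans
        (pow_add ϖ _ r ▸ mul_dvd_mul hx dvd_rfl)).mul_right b
    exact dvd_add (dvd_sub ((pow_dvd_pow ϖ hm).mul_left a) hxr) hx2

theorem card_quotient_span_pow {R : Type*} [CommRing R] [IsDedekindDomain R] {ϖ : R}
    (hϖ : Prime ϖ) (n : ℕ) :
    Nat.card (R ⧸ Ideal.span {ϖ ^ n}) = Nat.card (R ⧸ Ideal.span {ϖ}) ^ n := by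
  have : (Ideal.span {ϖ}).IsPrime := (Ideal.span_singleton_prime hϖ.ne_zero).2 hϖ
  rw [← Ideal.span_singleton_pow]
  exact cardQuot_pow_of_prime (by simpa using hϖ.ne_zero)

theorem card_residues_pow_dvd {R : Type*} [CommRing R] [IsDomain R] {ϖ : R} (hϖ : ϖ ≠ 0)
    {k n : ℕ} (hk : k ≤ n) :
    Nat.card {α : R ⧸ Ideal.span {ϖ ^ n} //
        ∃ x : R, Ideal.Quotient.mk (Ideal.span {ϖ ^ n}) x = α ∧ ϖ ^ k ∣ x} =
      Nat.card (R ⧸ Ideal.span {ϖ ^ (n - k)}) := by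
  have hpow : ϖ ^ n = ϖ ^ k * ϖ ^ (n - k) := by rw [← pow_add, Nat.add_sub_cancel' hk]
  let f := Submodule.mapQ (Ideal.span {ϖ ^ (n - k)}) (Ideal.span {ϖ ^ n})
    (LinearMap.mulLeft R (ϖ ^ k)) fun y hy => by
      simp only [Submodule.mem_comap, LinearMap.mulLeft_apply, Ideal.mem_span_singleton,
        hpow] at hy ⊢
      exact mul_dvd_mul_left _ hy
  have hf : Function.Injective f := by
    rw [← LinearMap.ker_eq_bot, LinearMap.ker_eq_bot']
    intro z hz
    obtain ⟨y, rfl⟩ := Submodule.Quotient.mk_surjective _ z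
    simp only [f, Submodule.mapQ_apply, LinearMap.mulLeft_apply, Submodule.Quotient.mk_eq_zero,
      Ideal.mem_span_singleton, hpow] at hz ⊢
    exact (mul_dvd_mul_iff_left (pow_ne_zero _ hϖ)).1 hz
  have hrange : ∀ α, (∃ x : R, Ideal.Quotient.mk _ x = α ∧ ϖ ^ k ∣ x) ↔ α ∈ Set.range f := by
    intro α
    constructor
    · rintro ⟨_, rfl, c, rfl⟩
      exact ⟨Submodule.Quotient.mk c, rfl⟩
    · rintro ⟨z, rfl⟩
      obtain ⟨y, rfl⟩ := Submodule.Quotient.mk_surjective _ z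
      exact ⟨ϖ ^ k * y, rfl, dvd_mul_right _ _⟩
  rw [Nat.card_congr (Equiv.subtypeEquivRight hrange), Nat.card_range_of_injective hf]

theorem stmt_6_general (O : Type*) [CommRing O]
    (o : Subring O) [IsDomain o] [IsDiscreteValuationRing o]
    (ϖ : o) (hϖo : Irreducible ϖ)
    (a b : o)
    (q : ℕ)
    (hqo : Nat.card (o ⧸ Ideal.span {ϖ}) = q)
    (n l r : ℕ) (hl : n ≤ l) (hr : r ≤ l) :
    Nat.card {α : o ⧸ Ideal.span {ϖ ^ n} //
        ∃ x : o, Ideal.Quotient.mk (Ideal.span {ϖ ^ n}) x = α ∧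
          a * ϖ ^ (2 * r) - x * b * ϖ ^ r + x ^ 2 ∈ Ideal.span {ϖ ^ (n + r - l)}}
      = if n + r ≤ l then q ^ n else q ^ ((n + l - r) / 2) := by
  have hϖ : Prime ϖ := hϖo.prime
  simp_rw [Ideal.mem_span_singleton, pow_dvd_quadratic_iff hϖ (by omega : n + r - l ≤ 2 * r)]
  rw [card_residues_pow_dvd hϖ.ne_zero (by omega), card_quotient_span_pow hϖ, hqo]
  split_ifs <;> congr 1 <;> omega

/-- Unramified-case counting: for `O = o[θ]` the ring of integers of an unramified
quadratic extension, `θ² - bθ + a = 0`, `n ≥ 1`, `l ≥ n` and `r ≤ l`, the number of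
`α ∈ o/ϖ^n` with `aϖ^{2r} - αbϖ^r + α² ∈ ϖ^{n+r-l} o` is `q^n` for `0 ≤ r ≤ l - n`
and `q^{⌊(n+l-r)/2⌋}` for `l - n < r ≤ l`. -/
theorem stmt_6 (O : Type*) [CommRing O] [IsDomain O] [IsDiscreteValuationRing O]
    (o : Subring O) [IsDomain o] [IsDiscreteValuationRing o]
    (ϖ : o) (hϖo : Irreducible ϖ) (hϖO : Irreducible (ϖ : O))
    (a b : o) (θ : O) (hθ : θ ^ 2 - (b : O) * θ + (a : O) = 0)
    (hgen : ∀ x : O, ∃ c d : o, x = (c : O) + (d : O) * θ)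
    (q : ℕ) (hq1 : 1 < q)
    (hqo : Nat.card (o ⧸ Ideal.span {ϖ}) = q)
    (hqO : Nat.card (O ⧸ Ideal.span {(ϖ : O)}) = q ^ 2)
    (n l r : ℕ) (hn : 1 ≤ n) (hl : n ≤ l) (hr : r ≤ l) :
    Nat.card {α : o ⧸ Ideal.span {ϖ ^ n} //
        ∃ x : o, Ideal.Quotient.mk (Ideal.span {ϖ ^ n}) x = α ∧
          a * ϖ ^ (2 * r) - x * b * ϖ ^ r + x ^ 2 ∈ Ideal.span {ϖ ^ (n + r - l)}}
      = if n + r ≤ l then q ^ n else q ^ ((n + l - r) / 2) :=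
  stmt_6_general O o ϖ hϖo a b q hqo n l r hl hr
end

section
/- The principal congruence subgroup Γ(N) of SL_2(O) (matrices congruent to the identity mod N) has trace set exactly 2 + N²O: every γ ∈ Γ(N) has trace in 2 + N²O, and conversely for every t ∈ O the matrix [[1+N²t, Nt],[N, 1]] lies in Γ(N) and has trace 2 + N²t. -/
/-- The trace set of the principal congruence subgroup `Γ(N) ≤ SL₂(O)` is exactly `2 + N²O`. -/
theorem stmt_8 (O : Type*) [CommRing O] (N : O) :
    {t : O | ∃ γ : Matrix.SpecialLinearGroup (Fin 2) O,
        (∀ i j, ((γ : Matrix (Fin 2) (Fin 2) O) - 1) i j ∈ Ideal.span {N}) ∧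
        Matrix.trace (γ : Matrix (Fin 2) (Fin 2) O) = t}
      = {t : O | ∃ u : O, t = 2 + N ^ 2 * u} := by
  ext t
  simp only [Set.mem_setOf_eq]
  constructor
  · rintro ⟨γ, hγ, rfl⟩
    have hdet : Matrix.det (γ : Matrix (Fin 2) (Fin 2) O) = 1 := γ.prop
    rw [Matrix.det_fin_two] at hdet
    obtain ⟨a, ha⟩ := (Ideal.mem_span_singleton.mp (hγ 0 0))
    obtain ⟨b, hb⟩ := (Ideal.mem_span_singleton.mp (hγ 0 1))
    obtain ⟨c, hc⟩ := (Ideal.mem_span_singleton.mp (hγ 1 0))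
    obtain ⟨d, hd⟩ := (Ideal.mem_span_singleton.mp (hγ 1 1))
    simp only [Matrix.sub_apply, Matrix.one_apply_eq, Matrix.one_apply_ne,
      Matrix.one_apply] at ha hb hc hd
    norm_num at ha hb hc hd
    have h00 : (γ : Matrix (Fin 2) (Fin 2) O) 0 0 = 1 + N * a := by linear_combination ha
    have h01 : (γ : Matrix (Fin 2) (Fin 2) O) 0 1 = N * b := by linear_combination hb
    have h10 : (γ : Matrix (Fin 2) (Fin 2) O) 1 0 = N * c := by linear_combination hc
    have h11 : (γ : Matrix (Fin 2) (Fin 2) O) 1 1 = 1 + N * d := by linear_combination hd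
    rw [h00, h01, h10, h11] at hdet
    refine ⟨b * c - a * d, ?_⟩
    rw [Matrix.trace_fin_two, h00, h11]
    linear_combination hdet
  · rintro ⟨u, rfl⟩
    refine ⟨⟨!![1 + N ^ 2 * u, N * u; N, 1], by simp [Matrix.det_fin_two_of]; ring⟩, ?_, ?_⟩
    · intro i j
      fin_cases i <;> fin_cases j <;>
        simp [Matrix.sub_apply, Matrix.one_apply, Ideal.mem_span_singleton] <;>
        first
          | exact ⟨N * u, by ring⟩
          | exact ⟨u, by ring⟩
          | exact dvd_refl N
    · rw [Matrix.trace_fin_two]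
      simp
      ring
end

section
/- Let q ∈ Z[i] be nonzero and write q = q₁q₂ where q₁ divides a power of N and gcd(q₂, N) = 1 (N ∈ Z[i] nonzero). Define S_q(0, N) = Σ_{b mod q} ρ_q(b(4 + N²b)), where ρ_q(δ) = |{x mod 2q : x² ≡ δ (mod 4q)}|. Then S_q(0, N) = Nr(q₁)·φ(q₂), where Nr is the norm on Z[i] and φ is the Euler function of Z[i]. -/
/-!
Completing the square: in `ℤ[i]` a square root `y` of `(Nb)² + 4b` modulo `4` satisfies
`y ≡ Nb (mod 2)`, so `y = Nb + 2τ` and `ρ_q(b(4 + N²b))` counts the `τ mod q` with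
`τ² + Nbτ = b`. Summing over `b` counts pairs with `b(1 - Nτ) = τ²`. For such a pair
`(1 - Nτ)(1 + Nτ + N²b) = 1`, so the pairs correspond to the `τ` with `1 - Nτ` a unit.
By the Chinese remainder theorem this count splits over `q₁` and `q₂`: modulo `q₁` the element
`N` is nilpotent and every `τ` qualifies, modulo `q₂` it is a unit and `τ ↦ 1 - Nτ` is a
bijection onto the units.
-/

open Ideal

section UnitShift

variable {A B : Type*} [CommRing A] [CommRing B]

theorem isUnit_one_sub_mul_of_sq_add_mul_mul_eq {n b t : A} (h : t ^ 2 + n * b * t = b) :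
    IsUnit (1 - n * t) :=
  IsUnit.of_mul_eq_one (1 + n * t + n ^ 2 * b) (by linear_combination (-n ^ 2) * h)

noncomputable def sqAddMulMulEqEquiv (n : A) :
    {p : A × A // p.2 ^ 2 + n * p.1 * p.2 = p.1} ≃ {t : A // IsUnit (1 - n * t)} where
  toFun p := ⟨p.1.2, isUnit_one_sub_mul_of_sq_add_mul_mul_eq p.2⟩
  invFun t := ⟨(↑t.2.unit⁻¹ * t.1 ^ 2, t.1), by
    have hinv : (↑t.2.unit⁻¹ : A) * (1 - n * t) = 1 := t.2.val_inv_mul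
    linear_combination (-t.1 ^ 2) * hinv⟩
  left_inv p := by
    obtain ⟨⟨b, t⟩, hp⟩ := p
    have hu := isUnit_one_sub_mul_of_sq_add_mul_mul_eq hp
    ext
    · linear_combination b * hu.val_inv_mul + (↑hu.unit⁻¹ : A) * hp
    · rfl
  right_inv _ := rfl

theorem sum_card_sq_add_mul_mul_eq [Fintype A] (n : A) :
    ∑ β : A, Nat.card {t : A // t ^ 2 + n * β * t = β} =
      Nat.card {t : A // IsUnit (1 - n * t)} := by
  rw [← Nat.card_sigma, ← Nat.card_congr (Equiv.subtypeProdEquivSigmaSubtype _)]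
  exact Nat.card_congr (sqAddMulMulEqEquiv n)

theorem card_isUnit_one_sub_mul_of_isNilpotent {n : A} (hn : IsNilpotent n) :
    Nat.card {t : A // IsUnit (1 - n * t)} = Nat.card A :=
  Nat.card_congr <| Equiv.subtypeUnivEquiv fun _ =>
    (Commute.isNilpotent_mul_right (Commute.all _ _) hn).isUnit_one_sub

theorem card_isUnit_one_sub_mul_of_isUnit {n : A} (hn : IsUnit n) :
    Nat.card {t : A // IsUnit (1 - n * t)} = Nat.card Aˣ := by
  rw [Nat.card_congr (Equiv.ofInjective _ Units.val_injective)]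
  exact Nat.card_congr <|
    ((Units.mulLeft hn.unit).trans (Equiv.subLeft 1)).subtypeEquiv fun t => by
      simp only [Equiv.trans_apply, Units.mulLeft_apply, IsUnit.unit_spec, Equiv.subLeft_apply]
      rfl

theorem card_isUnit_one_sub_mul_prod (n : A × B) :
    Nat.card {t : A × B // IsUnit (1 - n * t)} =
      Nat.card {a : A // IsUnit (1 - n.1 * a)} * Nat.card {b : B // IsUnit (1 - n.2 * b)} := by
  rw [← Nat.card_prod]
  exact Nat.card_congr <| (Equiv.subtypeEquivRight fun _ => Prod.isUnit_iff).trans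
    (Equiv.subtypeProdEquivProd (p := fun a => IsUnit (1 - n.1 * a))
      (q := fun b => IsUnit (1 - n.2 * b)))

theorem card_isUnit_one_sub_mul_congr (e : A ≃+* B) (n : A) :
    Nat.card {t : A // IsUnit (1 - n * t)} = Nat.card {t : B // IsUnit (1 - e n * t)} :=
  Nat.card_congr <| e.toEquiv.subtypeEquiv fun t => by
    rw [RingEquiv.toEquiv_eq_coe, EquivLike.coe_coe, ← map_mul, ← map_one e, ← map_sub,
      isUnit_map_iff]

end UnitShift

section SpanSingletonQuotient

variable {R : Type*} [CommRing R]

theorem Ideal.Quotient.mk_span_singleton_eq_iff {q a b : R} :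
    Ideal.Quotient.mk (span {q}) a = Ideal.Quotient.mk (span {q}) b ↔ q ∣ a - b := by
  rw [Ideal.Quotient.mk_eq_mk_iff_sub_mem, mem_span_singleton]

theorem Ideal.Quotient.mk_sq_add_mul_eq_iff {q m c τ : R} :
    Ideal.Quotient.mk (span {q}) τ ^ 2 +
        Ideal.Quotient.mk (span {q}) m * Ideal.Quotient.mk (span {q}) τ =
      Ideal.Quotient.mk (span {q}) c ↔ q ∣ τ ^ 2 + m * τ - c := by
  rw [← map_pow, ← map_mul, ← map_add, mk_span_singleton_eq_iff]

theorem Ideal.Quotient.isUnit_mk_of_isCoprime {q x : R} (h : IsCoprime q x) :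
    IsUnit (Ideal.Quotient.mk (span {q}) x) := by
  obtain ⟨a, b, hab⟩ := h
  refine .of_mul_eq_one (Ideal.Quotient.mk _ b) ?_
  rw [← map_mul, ← map_one (Ideal.Quotient.mk _), Ideal.Quotient.mk_span_singleton_eq_iff]
  exact ⟨-a, by linear_combination hab⟩

theorem card_isUnit_one_sub_mk_mul_of_isCoprime {q₁ q₂ : R} (h : IsCoprime q₁ q₂) (N : R) :
    Nat.card {t : R ⧸ span {q₁ * q₂} // IsUnit (1 - Ideal.Quotient.mk _ N * t)} =
      Nat.card {t : R ⧸ span {q₁} // IsUnit (1 - Ideal.Quotient.mk _ N * t)} *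
        Nat.card {t : R ⧸ span {q₂} // IsUnit (1 - Ideal.Quotient.mk _ N * t)} := by
  let e := (quotEquivOfEq (span_singleton_mul_span_singleton q₁ q₂).symm).trans
    (quotientMulEquivQuotientProd _ _ ((isCoprime_span_singleton_iff _ _).2 h))
  rw [card_isUnit_one_sub_mul_congr e, card_isUnit_one_sub_mul_prod]
  rfl

variable {q : R} {T : Finset R}

theorem bijective_mk_of_forall_existsUnique_dvd_sub (hT : ∀ z, ∃! b, b ∈ T ∧ q ∣ z - b) :
    Function.Bijective fun b : T => Ideal.Quotient.mk (span {q}) (b : R) := by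
  constructor
  · rintro ⟨a, ha⟩ ⟨a', ha'⟩ h
    obtain ⟨c, -, hc⟩ := hT a
    exact Subtype.ext <| (hc a ⟨ha, by simp⟩).trans
      (hc a' ⟨ha', Ideal.Quotient.mk_span_singleton_eq_iff.1 h⟩).symm
  · intro β
    obtain ⟨z, rfl⟩ := Ideal.Quotient.mk_surjective β
    obtain ⟨b, ⟨hb, hzb⟩, -⟩ := hT z
    exact ⟨⟨b, hb⟩, (Ideal.Quotient.mk_span_singleton_eq_iff.2 hzb).symm⟩

theorem sum_mk_eq_sum_univ_of_forall_existsUnique_dvd_sub [Fintype (R ⧸ span {q})]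
    {M : Type*} [AddCommMonoid M] (hT : ∀ z, ∃! b, b ∈ T ∧ q ∣ z - b)
    (f : R ⧸ span {q} → M) :
    ∑ b ∈ T, f (Ideal.Quotient.mk _ b) = ∑ β, f β := by
  rw [← Finset.sum_coe_sort T]
  exact Fintype.sum_bijective _ (bijective_mk_of_forall_existsUnique_dvd_sub hT) _ _ fun _ => rfl

end SpanSingletonQuotient

namespace GaussianInt

theorem two_dvd_sub_of_four_dvd_sq_sub_sq {y z : GaussianInt} (h : 4 ∣ y ^ 2 - z ^ 2) :
    2 ∣ y - z := by
  -- the squares of the residues `0, 1, i, 1 + i` modulo `2` are distinct modulo `4`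
  have key : ∀ a b c e : ZMod 4, a ^ 2 - b ^ 2 - (c ^ 2 - e ^ 2) = 0 →
      2 * a * b - 2 * c * e = 0 → 2 * (a - c) = 0 ∧ 2 * (b - e) = 0 := by
    decide
  have h4 : ((4 : ℤ) : GaussianInt) ∣ y ^ 2 - z ^ 2 := by exact_mod_cast h
  obtain ⟨hre, him⟩ := (Zsqrtd.intCast_dvd _ _).1 h4
  simp only [sq, Zsqrtd.re_sub, Zsqrtd.im_sub, Zsqrtd.re_mul, Zsqrtd.im_mul] at hre him
  have hre' := (ZMod.intCast_zmod_eq_zero_iff_dvd _ 4).2 hre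
  have him' := (ZMod.intCast_zmod_eq_zero_iff_dvd _ 4).2 him
  push_cast at hre' him'
  obtain ⟨hre2, him2⟩ :=
    key y.re y.im z.re z.im (by linear_combination hre') (by linear_combination him')
  have h2re :=
    (ZMod.intCast_zmod_eq_zero_iff_dvd (2 * (y.re - z.re)) 4).1 (by push_cast; exact hre2)
  have h2im :=
    (ZMod.intCast_zmod_eq_zero_iff_dvd (2 * (y.im - z.im)) 4).1 (by push_cast; exact him2)
  rw [show (2 : GaussianInt) = ((2 : ℤ) : GaussianInt) by norm_cast, Zsqrtd.intCast_dvd]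
  constructor <;> simp only [Zsqrtd.re_sub, Zsqrtd.im_sub] <;> omega

noncomputable def rho (q δ : GaussianInt) : ℕ :=
  Nat.card {x : GaussianInt ⧸ span {2 * q} //
    ∃ y, Ideal.Quotient.mk (span {2 * q}) y = x ∧ 4 * q ∣ y ^ 2 - δ}

theorem four_mul_dvd_sq_sub_iff (q m c τ : GaussianInt) :
    4 * q ∣ (m + 2 * τ) ^ 2 - (m ^ 2 + 4 * c) ↔ q ∣ τ ^ 2 + m * τ - c := by
  rw [show (m + 2 * τ) ^ 2 - (m ^ 2 + 4 * c) = 4 * (τ ^ 2 + m * τ - c) by ring]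
  exact mul_dvd_mul_iff_left (by decide)

theorem rho_sq_add_four_mul (q m c : GaussianInt) :
    rho q (m ^ 2 + 4 * c) = Nat.card {t : GaussianInt ⧸ span {q} //
      t ^ 2 + Ideal.Quotient.mk _ m * t = Ideal.Quotient.mk _ c} := by
  let f (t : {t : GaussianInt ⧸ span {q} //
        t ^ 2 + Ideal.Quotient.mk _ m * t = Ideal.Quotient.mk _ c}) :
      {x : GaussianInt ⧸ span {2 * q} //
        ∃ y, Ideal.Quotient.mk (span {2 * q}) y = x ∧ 4 * q ∣ y ^ 2 - (m ^ 2 + 4 * c)} :=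
    ⟨Ideal.Quotient.mk _ (m + 2 * t.1.out), _, rfl, by
      rw [four_mul_dvd_sq_sub_iff, ← Ideal.Quotient.mk_sq_add_mul_eq_iff, Ideal.Quotient.mk_out]
      exact t.2⟩
  refine (Nat.card_congr (Equiv.ofBijective f ⟨?_, ?_⟩)).symm
  · rintro ⟨t, _⟩ ⟨t', _⟩ h
    simp only [f] at h
    rw [Subtype.mk.injEq, Ideal.Quotient.mk_span_singleton_eq_iff,
      show m + 2 * t.out - (m + 2 * t'.out) = 2 * (t.out - t'.out) by ring,
      mul_dvd_mul_iff_left two_ne_zero, ← Ideal.Quotient.mk_span_singleton_eq_iff,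
      Ideal.Quotient.mk_out, Ideal.Quotient.mk_out] at h
    exact Subtype.ext h
  · rintro ⟨_, y, rfl, hy⟩
    obtain ⟨τ, hτ⟩ : 2 ∣ y - m := by
      refine two_dvd_sub_of_four_dvd_sq_sub_sq ?_
      convert ((dvd_mul_right 4 q).trans hy).add (dvd_mul_right 4 c) using 1
      ring
    obtain rfl : y = m + 2 * τ := by linear_combination hτ
    refine ⟨⟨Ideal.Quotient.mk _ τ, Ideal.Quotient.mk_sq_add_mul_eq_iff.2
      ((four_mul_dvd_sq_sub_iff q m c τ).1 hy)⟩, Subtype.ext ?_⟩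
    have hτ' : q ∣ (Ideal.Quotient.mk (span {q}) τ).out - τ :=
      Ideal.Quotient.mk_span_singleton_eq_iff.1 (Ideal.Quotient.mk_out _)
    rw [Ideal.Quotient.mk_span_singleton_eq_iff]
    convert mul_dvd_mul_left 2 hτ' using 1
    ring

end GaussianInt

theorem stmt_10_general (N q q₁ q₂ : GaussianInt)
    (hfac : q = q₁ * q₂) (h1 : ∃ m : ℕ, q₁ ∣ N ^ m) (h2 : IsCoprime q₂ N)
    (T : Finset GaussianInt) (hT : ∀ z : GaussianInt, ∃! b, b ∈ T ∧ q ∣ (z - b)) :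
    (∑ b ∈ T, Nat.card {x : GaussianInt ⧸ Ideal.span {2 * q} //
        ∃ y : GaussianInt, Ideal.Quotient.mk (Ideal.span {2 * q}) y = x ∧
          (4 * q) ∣ (y ^ 2 - b * (4 + N ^ 2 * b))})
      = Nat.card (GaussianInt ⧸ Ideal.span {q₁}) *
          Nat.card ((GaussianInt ⧸ Ideal.span {q₂})ˣ) := by
  obtain ⟨m, hm⟩ := h1
  have hnil : IsNilpotent (Ideal.Quotient.mk (span {q₁}) N) :=
    ⟨m, by rwa [← map_pow, Ideal.Quotient.eq_zero_iff_dvd]⟩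
  have hcop : IsCoprime q₁ q₂ := ((h2.pow_right (n := m)).of_isCoprime_of_dvd_right hm).symm
  have : Fintype (GaussianInt ⧸ span {q}) := @Fintype.ofFinite _
    (Finite.of_surjective _ (bijective_mk_of_forall_existsUnique_dvd_sub hT).2)
  calc ∑ b ∈ T, GaussianInt.rho q (b * (4 + N ^ 2 * b))
      = ∑ b ∈ T, Nat.card {t : GaussianInt ⧸ span {q} //
          t ^ 2 + Ideal.Quotient.mk _ N * Ideal.Quotient.mk _ b * t = Ideal.Quotient.mk _ b} := by
        refine Finset.sum_congr rfl fun b _ => ?_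
        rw [show b * (4 + N ^ 2 * b) = (N * b) ^ 2 + 4 * b by ring,
          GaussianInt.rho_sq_add_four_mul, map_mul]
    _ = ∑ β, Nat.card {t : GaussianInt ⧸ span {q} //
          t ^ 2 + Ideal.Quotient.mk _ N * β * t = β} :=
        sum_mk_eq_sum_univ_of_forall_existsUnique_dvd_sub hT
          fun β => Nat.card {t // t ^ 2 + Ideal.Quotient.mk _ N * β * t = β}
    _ = Nat.card {t : GaussianInt ⧸ span {q} // IsUnit (1 - Ideal.Quotient.mk _ N * t)} :=
        sum_card_sq_add_mul_mul_eq _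
    _ = _ := by
        subst hfac
        rw [card_isUnit_one_sub_mk_mul_of_isCoprime hcop,
          card_isUnit_one_sub_mul_of_isNilpotent hnil,
          card_isUnit_one_sub_mul_of_isUnit (Ideal.Quotient.isUnit_mk_of_isCoprime h2)]

/-- For `q = q₁q₂ ∈ ℤ[i]` with `q₁ ∣ N^∞` and `(q₂, N) = 1`, the sum
`S_q(0,N) = Σ_{b mod q} ρ_q(b(4+N²b))` equals `Nr(q₁)·φ(q₂)`. -/
theorem stmt_10 (N q q₁ q₂ : GaussianInt) (hq : q ≠ 0) (hN : N ≠ 0)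
    (hfac : q = q₁ * q₂) (h1 : ∃ m : ℕ, q₁ ∣ N ^ m) (h2 : IsCoprime q₂ N)
    (T : Finset GaussianInt) (hT : ∀ z : GaussianInt, ∃! b, b ∈ T ∧ q ∣ (z - b)) :
    (∑ b ∈ T, Nat.card {x : GaussianInt ⧸ Ideal.span {2 * q} //
        ∃ y : GaussianInt, Ideal.Quotient.mk (Ideal.span {2 * q}) y = x ∧
          (4 * q) ∣ (y ^ 2 - b * (4 + N ^ 2 * b))})
      = Nat.card (GaussianInt ⧸ Ideal.span {q₁}) *
          Nat.card ((GaussianInt ⧸ Ideal.span {q₂})ˣ) :=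
  stmt_10_general N q q₁ q₂ hfac h1 h2 T hT
end

section
/- Let o be the ring of integers of a non-archimedean local field with residue cardinality q, let n ≥ 1, 0 ≤ l < n, and n − l ≤ r ≤ l. Then for α ∈ o, the condition α(α + ϖ^r) ∈ ϖ^{n+r−l}o is equivalent to α ∈ ϖ^{⌈(n+r−l)/2⌉}o. Consequently |{α ∈ o/ϖ^n o : α(α+ϖ^r) ∈ ϖ^{n+r−l}o}| = q^{n − ⌈(n+r−l)/2⌉} = q^{⌊(n+l−r)/2⌋}. -/
/-!
Write `a = u ϖ ^ t` with `u` a unit and put `m = n + r - l ≤ 2r`, `k = ⌈m / 2⌉ ≤ r`. If `t < k`,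
then `t < r`, so `a + ϖ ^ r = ϖ ^ t (u + ϖ ^ (r - t))` is `ϖ ^ t` times a unit and
`a (a + ϖ ^ r)` has valuation exactly `2t < m`. If `t ≥ k`, both factors are divisible by `ϖ ^ k`,
and `2k ≥ m`. Hence the solutions modulo `ϖ ^ n` form the image of `ϖ ^ k o` in `o / ϖ ^ n o`,
which has `|o / ϖ ^ n o| / |o / ϖ ^ k o| = q ^ (n - k)` elements.
-/

theorem IsLocalRing.isUnit_add_of_not_isUnit {R : Type*} [CommRing R] [IsLocalRing R] {u x : R}
    (hu : IsUnit u) (hx : ¬IsUnit x) : IsUnit (u + x) := by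
  by_contra h
  have : u + x + -x ∈ nonunits R := IsLocalRing.nonunits_add h (by simpa using hx)
  exact (add_neg_cancel_right u x ▸ this) hu

theorem pow_mul_mul_add_pow {R : Type*} [CommRing R] (ϖ x : R) {s r : ℕ} (h : s ≤ r) :
    ϖ ^ s * x * (ϖ ^ s * x + ϖ ^ r) = ϖ ^ (2 * s) * (x * (x + ϖ ^ (r - s))) := by
  rw [← pow_mul_pow_sub ϖ h, two_mul, pow_add]
  ring

namespace IsDiscreteValuationRing

variable {o : Type*} [CommRing o] [IsDomain o] [IsDiscreteValuationRing o] {ϖ : o}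

theorem pow_dvd_mul_add_pow_iff (hϖ : Irreducible ϖ) {m r : ℕ} (hm : m ≤ 2 * r) (a : o) :
    ϖ ^ m ∣ a * (a + ϖ ^ r) ↔ ϖ ^ ((m + 1) / 2) ∣ a := by
  constructor
  · contrapose
    intro hna
    obtain ⟨t, u, rfl⟩ := eq_unit_mul_pow_irreducible
      (show a ≠ 0 by rintro rfl; exact hna (dvd_zero _)) hϖ
    have ht : t < (m + 1) / 2 := by
      by_contra! ht
      exact hna ((pow_dvd_pow ϖ ht).mul_left _)
    have hunit : IsUnit ((u : o) * (u + ϖ ^ (r - t))) :=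
      u.isUnit.mul <| IsLocalRing.isUnit_add_of_not_isUnit u.isUnit fun h =>
        hϖ.not_isUnit ((isUnit_pow_iff (by omega)).mp h)
    rw [mul_comm (u : o), pow_mul_mul_add_pow ϖ _ (by omega), hunit.dvd_mul_right,
      pow_dvd_pow_iff hϖ.ne_zero hϖ.not_isUnit]
    omega
  · rintro ⟨c, rfl⟩
    rw [pow_mul_mul_add_pow ϖ c (by omega)]
    exact (pow_dvd_pow ϖ (by omega)).mul_right _

theorem card_quotient_span_pow (hϖ : Irreducible ϖ) (j : ℕ) :
    Nat.card (o ⧸ Ideal.span {ϖ ^ j}) = Nat.card (o ⧸ Ideal.span {ϖ}) ^ j := by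
  have : (Ideal.span {ϖ}).IsPrime := (Ideal.span_singleton_prime hϖ.ne_zero).mpr hϖ.prime
  rw [← Ideal.span_singleton_pow, ← Submodule.cardQuot_apply,
    cardQuot_pow_of_prime (by simp [hϖ.ne_zero]), Submodule.cardQuot_apply]

theorem card_map_mkQ_span_pow (hϖ : Irreducible ϖ) (hfin : 0 < Nat.card (o ⧸ Ideal.span {ϖ}))
    (k n : ℕ) :
    Nat.card (Submodule.map (Ideal.span {ϖ ^ n}).mkQ (Ideal.span {ϖ ^ k}))
      = Nat.card (o ⧸ Ideal.span {ϖ}) ^ (n - k) := by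
  rcases le_total k n with hkn | hnk
  · have hmul := Submodule.card_quotient_mul_card_quotient _ _
      (Ideal.span_singleton_le_span_singleton.mpr (pow_dvd_pow ϖ hkn))
    rw [card_quotient_span_pow hϖ, card_quotient_span_pow hϖ] at hmul
    refine Nat.eq_of_mul_eq_mul_right (pow_pos hfin k) ?_
    rw [hmul, ← pow_add, Nat.sub_add_cancel hkn]
  · have hle : Ideal.span {ϖ ^ k} ≤ Ideal.span {ϖ ^ n} :=
      Ideal.span_singleton_le_span_singleton.mpr (pow_dvd_pow ϖ hnk)
    rw [Nat.sub_eq_zero_of_le hnk, pow_zero, eq_bot_iff.mpr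
      ((Submodule.map_mono hle).trans (Submodule.mkQ_map_self _).le)]
    simp

end IsDiscreteValuationRing

theorem stmt_18_general (o : Type*) [CommRing o] [IsDomain o] [IsDiscreteValuationRing o]
    (ϖ : o) (hϖ : Irreducible ϖ) (q : ℕ) (hq0 : 0 < q)
    (hq : Nat.card (o ⧸ Ideal.span {ϖ}) = q)
    (n l r : ℕ) (hl : l < n) (hrl : n ≤ r + l) :
    (∀ a : o, a * (a + ϖ ^ r) ∈ Ideal.span {ϖ ^ (n + r - l)} ↔
        a ∈ Ideal.span {ϖ ^ ((n + r - l + 1) / 2)}) ∧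
    (Nat.card {α : o ⧸ Ideal.span {ϖ ^ n} //
        ∃ a : o, Ideal.Quotient.mk (Ideal.span {ϖ ^ n}) a = α ∧
          a * (a + ϖ ^ r) ∈ Ideal.span {ϖ ^ (n + r - l)}}
      = q ^ (n - (n + r - l + 1) / 2) ∧
     Nat.card {α : o ⧸ Ideal.span {ϖ ^ n} //
        ∃ a : o, Ideal.Quotient.mk (Ideal.span {ϖ ^ n}) a = α ∧
          a * (a + ϖ ^ r) ∈ Ideal.span {ϖ ^ (n + r - l)}}
      = q ^ ((n + l - r) / 2)) := by
  have hmem_iff (a : o) : a * (a + ϖ ^ r) ∈ Ideal.span {ϖ ^ (n + r - l)} ↔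
      a ∈ Ideal.span {ϖ ^ ((n + r - l + 1) / 2)} := by
    simpa only [Ideal.mem_span_singleton] using
      IsDiscreteValuationRing.pow_dvd_mul_add_pow_iff hϖ (by omega) a
  have hcard : Nat.card {α : o ⧸ Ideal.span {ϖ ^ n} //
      ∃ a : o, Ideal.Quotient.mk (Ideal.span {ϖ ^ n}) a = α ∧
        a * (a + ϖ ^ r) ∈ Ideal.span {ϖ ^ (n + r - l)}} = q ^ (n - (n + r - l + 1) / 2) := by
    rw [← hq, ← IsDiscreteValuationRing.card_map_mkQ_span_pow hϖ (hq ▸ hq0)]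
    refine Nat.card_congr (Equiv.subtypeEquivRight fun α => ?_)
    simp only [Submodule.mem_map, hmem_iff, and_comm]
    rfl
  exact ⟨hmem_iff, hcard, hcard.trans (by congr 1; omega)⟩

/-- For `n ≥ 1`, `l < n` and `n - l ≤ r ≤ l`, the condition `α(α+ϖ^r) ∈ ϖ^{n+r-l} o` is
equivalent to `α ∈ ϖ^{⌈(n+r-l)/2⌉} o`; consequently the number of such `α` in `o/ϖ^n o`
equals `q^{n-⌈(n+r-l)/2⌉} = q^{⌊(n+l-r)/2⌋}`. -/
theorem stmt_18 (o : Type*) [CommRing o] [IsDomain o] [IsDiscreteValuationRing o]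
    (ϖ : o) (hϖ : Irreducible ϖ) (q : ℕ) (hq0 : 0 < q)
    (hq : Nat.card (o ⧸ Ideal.span {ϖ}) = q)
    (n l r : ℕ) (hn : 1 ≤ n) (hl : l < n) (hrl : n ≤ r + l) (hr : r ≤ l) :
    (∀ a : o, a * (a + ϖ ^ r) ∈ Ideal.span {ϖ ^ (n + r - l)} ↔
        a ∈ Ideal.span {ϖ ^ ((n + r - l + 1) / 2)}) ∧
    (Nat.card {α : o ⧸ Ideal.span {ϖ ^ n} //
        ∃ a : o, Ideal.Quotient.mk (Ideal.span {ϖ ^ n}) a = α ∧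
          a * (a + ϖ ^ r) ∈ Ideal.span {ϖ ^ (n + r - l)}}
      = q ^ (n - (n + r - l + 1) / 2) ∧
     Nat.card {α : o ⧸ Ideal.span {ϖ ^ n} //
        ∃ a : o, Ideal.Quotient.mk (Ideal.span {ϖ ^ n}) a = α ∧
          a * (a + ϖ ^ r) ∈ Ideal.span {ϖ ^ (n + r - l)}}
      = q ^ ((n + l - r) / 2)) :=
  stmt_18_general o ϖ hϖ q hq0 hq n l r hl hrl
end
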